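/- arXiv:2402.07665 — 3 statements merged into one kernel-verified Lean document; each statement's English description precedes it below -/
import Mathlib

section
/- Let u0 : ℝ^d → ℝ be a Lipschitz function that is differentiable with Lipschitz gradient, let H : ℝ^d → ℝ be twice continuously differentiable, and define W(t,x) = x − t·∇H(∇u0(x)) and T = 1/Lip(x ↦ ∇H(∇u0(x))) ∈ (0,∞]. Then: (a) for every t ∈ [0,T), the map W(t,·) : ℝ^d → ℝ^d is surjective; (b) the push-forward of the Lebesgue measure on [0,T)×ℝ^d under the map (t,x) ↦ (t, W(t,x)) is absolutely continuous with respect to the Lebesgue measure on [0,T)×ℝ^d. -/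
open MeasureTheory Set Function
open scoped NNReal ENNReal

lemma key_est {E : Type*} [NormedAddCommGroup E] [NormedSpace ℝ E]
    (F : E → E) (L : NNReal) (hF : LipschitzWith L F) (n : ℕ)
    {t s : ℝ} {x y : E}
    (ht0 : 0 ≤ t) (ht : t * L ≤ 1 - 1 / (n + 1)) (hy : ‖y‖ ≤ n) :
    dist ((t, x) : ℝ × E) (s, y) ≤
      (1 + (‖F 0‖ + L * n)) * (n + 1) *
        dist ((t, x - t • F x) : ℝ × E) (s, y - s • F y) := by
  set C : ℝ := ‖F 0‖ + L * n with hC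
  have hC0 : 0 ≤ C := by positivity
  set D := dist ((t, x - t • F x) : ℝ × E) (s, y - s • F y) with hD
  have hD0 : 0 ≤ D := dist_nonneg
  have hts : |t - s| ≤ D := by
    rw [hD, Prod.dist_eq]
    exact le_trans (le_of_eq (Real.dist_eq t s).symm) (le_max_left _ _)
  have h2 : ‖(x - t • F x) - (y - s • F y)‖ ≤ D := by
    rw [hD, Prod.dist_eq, ← dist_eq_norm]
    exact le_max_right _ _
  have hFy : ‖F y‖ ≤ C := by
    have h := hF.dist_le_mul y 0
    rw [dist_eq_norm, dist_eq_norm, sub_zero] at h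
    have h1 : ‖F y‖ ≤ ‖F 0‖ + ‖F y - F 0‖ := by
      calc ‖F y‖ = ‖F 0 + (F y - F 0)‖ := by rw [add_sub_cancel]
        _ ≤ ‖F 0‖ + ‖F y - F 0‖ := norm_add_le _ _
    have h3 : (L : ℝ) * ‖y‖ ≤ L * n := by
      exact mul_le_mul_of_nonneg_left hy (NNReal.coe_nonneg L)
    rw [hC]; linarith
  have key1 : ‖(x - t • F x) - (y - t • F y)‖ ≤ D + C * D := by
    have hid : (x - t • F x) - (y - t • F y)
        = ((x - t • F x) - (y - s • F y)) + (t - s) • F y := by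
      rw [sub_smul]; abel
    rw [hid]
    have h3 : ‖(t - s) • F y‖ ≤ C * D := by
      rw [norm_smul, Real.norm_eq_abs]
      calc |t - s| * ‖F y‖ ≤ D * C :=
          mul_le_mul hts hFy (norm_nonneg _) hD0
        _ = C * D := mul_comm _ _
    calc ‖_ + _‖ ≤ ‖(x - t • F x) - (y - s • F y)‖ + ‖(t - s) • F y‖ := norm_add_le _ _
      _ ≤ D + C * D := add_le_add h2 h3
  have key2 : ‖x - y‖ ≤ (D + C * D) + t * ((L : ℝ) * ‖x - y‖) := by
    have hxy : x - y = ((x - t • F x) - (y - t • F y)) + t • (F x - F y) := by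
      rw [smul_sub]; abel
    have h5 : ‖t • (F x - F y)‖ ≤ t * ((L : ℝ) * ‖x - y‖) := by
      rw [norm_smul, Real.norm_eq_abs, abs_of_nonneg ht0]
      have := hF.dist_le_mul x y
      rw [dist_eq_norm, dist_eq_norm] at this
      exact mul_le_mul_of_nonneg_left this ht0
    calc ‖x - y‖ = ‖((x - t • F x) - (y - t • F y)) + t • (F x - F y)‖ := by rw [← hxy]
      _ ≤ ‖(x - t • F x) - (y - t • F y)‖ + ‖t • (F x - F y)‖ := norm_add_le _ _
      _ ≤ (D + C * D) + t * ((L : ℝ) * ‖x - y‖) := add_le_add key1 h5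
  have hfrac : 1 / ((n : ℝ) + 1) * ‖x - y‖ ≤ D + C * D := by
    have hmul : t * (L : ℝ) * ‖x - y‖ ≤ (1 - 1 / ((n : ℝ) + 1)) * ‖x - y‖ :=
      mul_le_mul_of_nonneg_right ht (norm_nonneg _)
    nlinarith [key2, norm_nonneg (x - y)]
  have hn1 : (0 : ℝ) < (n : ℝ) + 1 := by positivity
  have hxyD : ‖x - y‖ ≤ (1 + C) * ((n : ℝ) + 1) * D := by
    have hrw : ‖x - y‖ = ((n : ℝ) + 1) * (1 / ((n : ℝ) + 1) * ‖x - y‖) := by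
      field_simp
    calc ‖x - y‖ = ((n : ℝ) + 1) * (1 / ((n : ℝ) + 1) * ‖x - y‖) := hrw
      _ ≤ ((n : ℝ) + 1) * (D + C * D) := by
          exact mul_le_mul_of_nonneg_left hfrac (le_of_lt hn1)
      _ = (1 + C) * ((n : ℝ) + 1) * D := by ring
  have hKge : (1 : ℝ) ≤ (1 + C) * ((n : ℝ) + 1) := by nlinarith
  rw [Prod.dist_eq]
  apply max_le
  · calc dist t s ≤ D := by rw [Real.dist_eq]; exact hts
      _ = 1 * D := (one_mul D).symm
      _ ≤ (1 + C) * ((n : ℝ) + 1) * D := mul_le_mul_of_nonneg_right hKge hD0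
  · rw [dist_eq_norm]; exact hxyD


lemma aux_surj (d : ℕ) (F : EuclideanSpace ℝ (Fin d) → EuclideanSpace ℝ (Fin d))
    (L : NNReal) (hL : LipschitzWith L F) :
    ∀ t : ℝ, 0 ≤ t → t * (L : ℝ) < 1 →
      Function.Surjective (fun x => x - t • F x) := by
  intro t ht0 htL y
  set K : ℝ≥0 := Real.toNNReal (t * L) with hK
  have hKc : (K : ℝ) = t * L := Real.coe_toNNReal _ (by positivity)
  have hK1 : K < 1 := by
    rw [← NNReal.coe_lt_coe, hKc]; exact htL
  have hlip : LipschitzWith K (fun x => y + t • F x) := by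
    apply LipschitzWith.of_dist_le_mul
    intro a b
    have hd := hL.dist_le_mul a b
    calc dist (y + t • F a) (y + t • F b) = dist (t • F a) (t • F b) := dist_add_left y _ _
      _ = ‖t‖ * dist (F a) (F b) := dist_smul₀ t _ _
      _ = t * dist (F a) (F b) := by rw [Real.norm_eq_abs, abs_of_nonneg ht0]
      _ ≤ t * ((L : ℝ) * dist a b) := mul_le_mul_of_nonneg_left hd ht0
      _ = (K : ℝ) * dist a b := by rw [hKc]; ring
  have hc : ContractingWith K (fun x => y + t • F x) := ⟨hK1, hlip⟩
  refine ⟨hc.fixedPoint _, ?_⟩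
  have hfix := hc.fixedPoint_isFixedPt
  simp only [IsFixedPt] at hfix
  exact (eq_sub_of_add_eq hfix).symm

lemma aux_ac (d : ℕ) (F : EuclideanSpace ℝ (Fin d) → EuclideanSpace ℝ (Fin d))
    (L : NNReal) (hL : LipschitzWith L F) :
    (Measure.map
        (fun p : ℝ × EuclideanSpace ℝ (Fin d) => (p.1, p.2 - p.1 • F p.2))
        ((volume : Measure (ℝ × EuclideanSpace ℝ (Fin d))).restrict
          {p : ℝ × EuclideanSpace ℝ (Fin d) | 0 ≤ p.1 ∧ p.1 * (L : ℝ) < 1})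
      ≪ (volume : Measure (ℝ × EuclideanSpace ℝ (Fin d)))) := by
  set Φ : ℝ × EuclideanSpace ℝ (Fin d) → ℝ × EuclideanSpace ℝ (Fin d) := fun p => (p.1, p.2 - p.1 • F p.2) with hΦdef
  have hFcont : Continuous F := hL.continuous
  have hΦm : Measurable Φ := by
    apply Continuous.measurable
    exact continuous_fst.prodMk (continuous_snd.sub
      (continuous_fst.smul (hFcont.comp continuous_snd)))
  -- Haar measure instance for the product volume
  have hHaarVol : Measure.IsAddHaarMeasure (volume : Measure (ℝ × EuclideanSpace ℝ (Fin d))) := by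
    rw [Measure.volume_eq_prod]; infer_instance
  -- transfer between volume and Hausdorff measure
  have hHvol : ∀ B : Set (ℝ × EuclideanSpace ℝ (Fin d)),
      volume B = 0 ↔ μH[(Module.finrank ℝ (ℝ × EuclideanSpace ℝ (Fin d)) : ℝ)] B = 0 := by
    intro B
    constructor
    · intro hB
      have h := Measure.isAddLeftInvariant_eq_smul
        (μH[(Module.finrank ℝ (ℝ × EuclideanSpace ℝ (Fin d)) : ℝ)]) (volume : Measure (ℝ × EuclideanSpace ℝ (Fin d)))
      rw [h, Measure.smul_apply, hB, smul_zero]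
    · intro hB
      have h := Measure.isAddLeftInvariant_eq_smul
        (volume : Measure (ℝ × EuclideanSpace ℝ (Fin d))) (μH[(Module.finrank ℝ (ℝ × EuclideanSpace ℝ (Fin d)) : ℝ)])
      rw [h, Measure.smul_apply, hB, smul_zero]
  refine Measure.AbsolutelyContinuous.mk (fun N hN hN0 => ?_)
  rw [Measure.map_apply hΦm hN, Measure.restrict_apply (hΦm hN)]
  -- covering sets
  set A : ℕ → Set (ℝ × EuclideanSpace ℝ (Fin d)) := fun n =>
    {p | 0 ≤ p.1 ∧ p.1 * (L : ℝ) ≤ 1 - 1 / (n + 1) ∧ ‖p.2‖ ≤ n} with hA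
  have hcover : {p : ℝ × EuclideanSpace ℝ (Fin d) | 0 ≤ p.1 ∧ p.1 * (L : ℝ) < 1} ⊆ ⋃ n, A n := by
    rintro ⟨t, x⟩ ⟨ht0, htL⟩
    obtain ⟨n₁, hn₁⟩ := exists_nat_one_div_lt (show (0 : ℝ) < 1 - t * L by linarith)
    obtain ⟨n₂, hn₂⟩ := exists_nat_ge ‖x‖
    refine mem_iUnion.2 ⟨max n₁ n₂, ht0, ?_, ?_⟩
    · have hle : 1 / ((max n₁ n₂ : ℕ) + 1 : ℝ) ≤ 1 / ((n₁ : ℝ) + 1) := by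
        apply one_div_le_one_div_of_le (by positivity)
        have : (n₁ : ℝ) ≤ ((max n₁ n₂ : ℕ) : ℝ) := by
          exact_mod_cast Nat.le_max_left n₁ n₂
        linarith
      linarith
    · have : (n₂ : ℝ) ≤ ((max n₁ n₂ : ℕ) : ℝ) := by
        exact_mod_cast Nat.le_max_right n₁ n₂
      exact hn₂.trans this
  have hHN : μH[(Module.finrank ℝ (ℝ × EuclideanSpace ℝ (Fin d)) : ℝ)] N = 0 := (hHvol N).mp hN0
  have hr0 : (0 : ℝ) ≤ (Module.finrank ℝ (ℝ × EuclideanSpace ℝ (Fin d)) : ℝ) := by positivity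
  -- each piece is null
  have hnull : ∀ n : ℕ, volume (Φ ⁻¹' N ∩ A n) = 0 := by
    intro n
    set C : ℝ := ‖F 0‖ + (L : ℝ) * n with hC
    have hC0 : (0 : ℝ) ≤ C := by positivity
    set Kr : ℝ := (1 + C) * ((n : ℝ) + 1) with hKr
    have hKr0 : (0 : ℝ) ≤ Kr := by positivity
    have hkey : ∀ p ∈ A n, ∀ q ∈ A n, dist p q ≤ Kr * dist (Φ p) (Φ q) := by
      rintro ⟨t, x⟩ ⟨ht0, ht, -⟩ ⟨s, y⟩ ⟨-, -, hy⟩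
      exact key_est F L hL n ht0 ht hy
    have hinj : ∀ p ∈ A n, ∀ q ∈ A n, Φ p = Φ q → p = q := by
      intro p hp q hq hpq
      have := hkey p hp q hq
      rw [hpq, dist_self, mul_zero] at this
      exact dist_le_zero.mp this
    set g : ℝ × EuclideanSpace ℝ (Fin d) → ℝ × EuclideanSpace ℝ (Fin d) := invFunOn Φ (A n) with hg
    have hglip : LipschitzOnWith Kr.toNNReal g (Φ '' A n) := by
      apply LipschitzOnWith.of_dist_le_mul
      rintro z ⟨a, ha, rfl⟩ w ⟨b, hb, rfl⟩
      have hga : g (Φ a) ∈ A n := invFunOn_mem ⟨a, ha, rfl⟩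
      have hgae : Φ (g (Φ a)) = Φ a := invFunOn_eq ⟨a, ha, rfl⟩
      have hgb : g (Φ b) ∈ A n := invFunOn_mem ⟨b, hb, rfl⟩
      have hgbe : Φ (g (Φ b)) = Φ b := invFunOn_eq ⟨b, hb, rfl⟩
      have := hkey _ hga _ hgb
      rw [hgae, hgbe] at this
      rwa [Real.coe_toNNReal _ hKr0]
    have hgid : ∀ p ∈ A n, g (Φ p) = p := by
      intro p hp
      exact hinj _ (invFunOn_mem ⟨p, hp, rfl⟩) p hp (invFunOn_eq ⟨p, hp, rfl⟩)
    have hsub : Φ ⁻¹' N ∩ A n ⊆ g '' (Φ '' (Φ ⁻¹' N ∩ A n)) := by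
      rintro p ⟨hpN, hpA⟩
      exact ⟨Φ p, mem_image_of_mem _ ⟨hpN, hpA⟩, hgid p hpA⟩
    have himsub : Φ '' (Φ ⁻¹' N ∩ A n) ⊆ Φ '' A n :=
      image_mono inter_subset_right
    have himN : Φ '' (Φ ⁻¹' N ∩ A n) ⊆ N := by
      rintro z ⟨p, ⟨hpN, -⟩, rfl⟩; exact hpN
    have hμH : μH[(Module.finrank ℝ (ℝ × EuclideanSpace ℝ (Fin d)) : ℝ)] (Φ ⁻¹' N ∩ A n) = 0 := by
      refine le_antisymm ?_ zero_le
      calc μH[(Module.finrank ℝ (ℝ × EuclideanSpace ℝ (Fin d)) : ℝ)] (Φ ⁻¹' N ∩ A n)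
          ≤ μH[(Module.finrank ℝ (ℝ × EuclideanSpace ℝ (Fin d)) : ℝ)] (g '' (Φ '' (Φ ⁻¹' N ∩ A n))) :=
            measure_mono hsub
        _ ≤ (Kr.toNNReal : ℝ≥0∞) ^ (Module.finrank ℝ (ℝ × EuclideanSpace ℝ (Fin d)) : ℝ) *
            μH[(Module.finrank ℝ (ℝ × EuclideanSpace ℝ (Fin d)) : ℝ)] (Φ '' (Φ ⁻¹' N ∩ A n)) :=
            (hglip.mono himsub).hausdorffMeasure_image_le hr0
        _ ≤ (Kr.toNNReal : ℝ≥0∞) ^ (Module.finrank ℝ (ℝ × EuclideanSpace ℝ (Fin d)) : ℝ) *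
            μH[(Module.finrank ℝ (ℝ × EuclideanSpace ℝ (Fin d)) : ℝ)] N :=
            mul_le_mul_right (measure_mono himN) _
        _ = 0 := by rw [hHN, mul_zero]
    exact (hHvol _).mpr hμH
  have hmono : Φ ⁻¹' N ∩ {p : ℝ × EuclideanSpace ℝ (Fin d) | 0 ≤ p.1 ∧ p.1 * (L : ℝ) < 1}
      ⊆ ⋃ n, (Φ ⁻¹' N ∩ A n) := by
    rintro p ⟨h1, h2⟩
    obtain ⟨n, hps⟩ := mem_iUnion.mp (hcover h2)
    exact mem_iUnion.2 ⟨n, h1, hps⟩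
  exact measure_mono_null hmono (measure_iUnion_null hnull)

/-- Let `u₀ : ℝᵈ → ℝ` be Lipschitz and differentiable with Lipschitz
gradient, let `H` be `C²`, and set `W(t,x) = x − t·∇H(∇u₀(x))` and `T = 1/L`, where `L` is
the optimal Lipschitz constant of `x ↦ ∇H(∇u₀(x))` (with `T = +∞` when `L = 0`; the
condition `t ∈ [0,T)` is encoded as `0 ≤ t` and `t·L < 1`). Then:
(a) for every `t ∈ [0,T)` the map `W(t,·)` is surjective;
(b) the push-forward of the Lebesgue measure on `[0,T) × ℝᵈ` under `(t,x) ↦ (t, W(t,x))`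
is absolutely continuous with respect to the Lebesgue measure. -/
theorem characteristics_surjective_and_pushforward_ac
    (d : ℕ) (hd : 1 ≤ d)
    (H : EuclideanSpace ℝ (Fin d) → ℝ) (hH : ContDiff ℝ 2 H)
    (u0 : EuclideanSpace ℝ (Fin d) → ℝ)
    (hu0Lip : ∃ K, LipschitzWith K u0)
    (hu0Diff : Differentiable ℝ u0)
    (hu0GradLip : ∃ K, LipschitzWith K (fun x => gradient u0 x))
    (L : NNReal)
    (hL : LipschitzWith L (fun x => gradient H (gradient u0 x)))
    (hLopt : ∀ L' : NNReal, LipschitzWith L' (fun x => gradient H (gradient u0 x)) → L ≤ L') :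
    (∀ t : ℝ, 0 ≤ t → t * (L : ℝ) < 1 →
        Function.Surjective (fun x => x - t • gradient H (gradient u0 x))) ∧
    (Measure.map
        (fun p : ℝ × EuclideanSpace ℝ (Fin d) =>
          (p.1, p.2 - p.1 • gradient H (gradient u0 p.2)))
        ((volume : Measure (ℝ × EuclideanSpace ℝ (Fin d))).restrict
          {p : ℝ × EuclideanSpace ℝ (Fin d) | 0 ≤ p.1 ∧ p.1 * (L : ℝ) < 1})
      ≪ (volume : Measure (ℝ × EuclideanSpace ℝ (Fin d)))) := by
  refine ⟨fun t ht htL => ?_, ?_⟩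
  · exact aux_surj d (fun x => gradient H (gradient u0 x)) L hL t ht htL
  · exact aux_ac d (fun x => gradient H (gradient u0 x)) L hL
end

section
/- Let T* > 0, c ≥ 0, and let b : [0,T*]×ℝ^d → ℝ^d be a bounded continuous vector field, continuously differentiable in the space variable with bounded spatial derivative, such that div_x b(t,x) ≥ −c for every (t,x). Let X(t,x) denote the flow of b, i.e. the unique solution of ∂_t X(t,x) = b(t, X(t,x)) with X(0,x) = x, defined for all t ∈ [0,T*). Then for every R ∈ (0,∞], every t ∈ [0,T*) and every non-negative continuous function β : ℝ^d → ℝ, ∫_{B_R} β(X(t,x)) dx ≤ e^{ct} ∫_{B_{R + t‖b‖_∞}} β(x) dx. Moreover, for every Lebesgue-measurable set A ⊆ ℝ^d, the Lebesgue measure of {x : X(t,x) ∈ A} is at most e^{ct} times the Lebesgue measure of A; in particular, if A is Lebesgue-null then {x : X(t,x) ∈ A} is Lebesgue-null. -/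
open MeasureTheory Set Filter Finset
open scoped ENNReal Topology
set_option maxHeartbeats 1600000
set_option linter.unusedVariables false

lemma prod_one_add_sub_one_le {ι : Type*} (s : Finset ι) (x : ι → ℝ) :
    |∏ i ∈ s, (1 + x i) - 1| ≤ (∑ i ∈ s, |x i|) * ∏ i ∈ s, (1 + |x i|) := by
  induction s using Finset.cons_induction with
  | empty => simp
  | cons a s ha ih =>
    simp only [Finset.prod_cons, Finset.sum_cons]
    have hP : |∏ i ∈ s, (1 + x i)| ≤ ∏ i ∈ s, (1 + |x i|) := by
      rw [abs_prod]
      exact Finset.prod_le_prod (fun i _ => abs_nonneg _)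
        (fun i _ => (abs_add_le _ _).trans (by simp))
    have h1 : (1 + x a) * ∏ i ∈ s, (1 + x i) - 1
        = (∏ i ∈ s, (1 + x i) - 1) + x a * ∏ i ∈ s, (1 + x i) := by ring
    rw [h1]
    have hPpos : (0:ℝ) ≤ ∏ i ∈ s, (1 + |x i|) :=
      Finset.prod_nonneg fun i _ => by positivity
    have hsum : (0:ℝ) ≤ ∑ i ∈ s, |x i| := Finset.sum_nonneg fun i _ => abs_nonneg _
    calc |(∏ i ∈ s, (1 + x i) - 1) + x a * ∏ i ∈ s, (1 + x i)|
        ≤ |∏ i ∈ s, (1 + x i) - 1| + |x a| * |∏ i ∈ s, (1 + x i)| := by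
          refine (abs_add_le _ _).trans ?_; rw [abs_mul]
      _ ≤ (∑ i ∈ s, |x i|) * ∏ i ∈ s, (1 + |x i|) + |x a| * ∏ i ∈ s, (1 + |x i|) := by
          gcongr
      _ ≤ (|x a| + ∑ i ∈ s, |x i|) * ((1 + |x a|) * ∏ i ∈ s, (1 + |x i|)) := by
          nlinarith [abs_nonneg (x a), mul_nonneg (mul_nonneg (add_nonneg (abs_nonneg (x a)) hsum) (abs_nonneg (x a))) hPpos, mul_nonneg (mul_nonneg (abs_nonneg (x a)) (abs_nonneg (x a))) hPpos]

lemma prod_one_add_sub_one_sub_sum_le {ι : Type*} (s : Finset ι) (x : ι → ℝ) :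
    |∏ i ∈ s, (1 + x i) - 1 - ∑ i ∈ s, x i|
      ≤ (∑ i ∈ s, |x i|)^2 * ∏ i ∈ s, (1 + |x i|) := by
  induction s using Finset.cons_induction with
  | empty => simp
  | cons a s ha ih =>
    simp only [Finset.prod_cons, Finset.sum_cons]
    have key := prod_one_add_sub_one_le s x
    have hPpos : (0:ℝ) ≤ ∏ i ∈ s, (1 + |x i|) :=
      Finset.prod_nonneg fun i _ => by positivity
    have hsum : (0:ℝ) ≤ ∑ i ∈ s, |x i| := Finset.sum_nonneg fun i _ => abs_nonneg _
    have h1 : (1 + x a) * ∏ i ∈ s, (1 + x i) - 1 - (x a + ∑ i ∈ s, x i)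
        = (∏ i ∈ s, (1 + x i) - 1 - ∑ i ∈ s, x i) + x a * (∏ i ∈ s, (1 + x i) - 1) := by
      ring
    rw [h1]
    calc |(∏ i ∈ s, (1 + x i) - 1 - ∑ i ∈ s, x i) + x a * (∏ i ∈ s, (1 + x i) - 1)|
        ≤ |∏ i ∈ s, (1 + x i) - 1 - ∑ i ∈ s, x i| + |x a| * |∏ i ∈ s, (1 + x i) - 1| := by
          refine (abs_add_le _ _).trans ?_; rw [abs_mul]
      _ ≤ (∑ i ∈ s, |x i|)^2 * ∏ i ∈ s, (1 + |x i|)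
          + |x a| * ((∑ i ∈ s, |x i|) * ∏ i ∈ s, (1 + |x i|)) := by gcongr
      _ ≤ (|x a| + ∑ i ∈ s, |x i|)^2 * ((1 + |x a|) * ∏ i ∈ s, (1 + |x i|)) := by
          nlinarith [abs_nonneg (x a), hPpos, hsum,
            mul_nonneg (mul_nonneg (abs_nonneg (x a)) (abs_nonneg (x a))) hPpos,
            mul_nonneg (mul_nonneg hsum (abs_nonneg (x a))) hPpos,
            mul_nonneg (mul_nonneg (mul_nonneg hsum hsum) (abs_nonneg (x a))) hPpos,
            mul_nonneg (mul_nonneg (mul_nonneg hsum (abs_nonneg (x a))) (abs_nonneg (x a))) hPpos,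
            mul_nonneg (mul_nonneg (mul_nonneg (abs_nonneg (x a)) (abs_nonneg (x a))) (abs_nonneg (x a))) hPpos]

noncomputable def detC (d : ℕ) (L : ℝ) : ℝ := (1+L)^d * L^2 * (d^2 + d.factorial)

lemma detC_nonneg (d : ℕ) (L : ℝ) (hL : 0 ≤ L) : 0 ≤ detC d L := by
  unfold detC; positivity

lemma det_one_add_smul_sub_le (d : ℕ) (L h : ℝ) (hL : 0 ≤ L) (h0 : 0 ≤ h) (h1 : h ≤ 1)
    (M : Matrix (Fin d) (Fin d) ℝ) (hM : ∀ i j, |M i j| ≤ L) :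
    |(1 + h • M).det - 1 - h * M.trace| ≤ h^2 * detC d L := by
  classical
  set A : Matrix (Fin d) (Fin d) ℝ := 1 + h • M with hA
  have hdiag : ∀ i, A i i = 1 + h * M i i := by
    intro i; simp [hA, Matrix.one_apply, Matrix.add_apply]
  have hoff : ∀ i j, i ≠ j → A i j = h * M i j := by
    intro i j hij; simp [hA, Matrix.one_apply, Matrix.add_apply, hij]
  have habs : ∀ i j, |A i j| ≤ 1 + L := by
    intro i j
    rcases eq_or_ne i j with rfl | hij
    · rw [hdiag]
      calc |1 + h * M i i| ≤ |1| + |h * M i i| := abs_add_le _ _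
        _ ≤ 1 + L := by
            rw [abs_one, abs_mul, abs_of_nonneg h0]
            have := hM i i
            nlinarith [abs_nonneg (M i i)]
    · rw [hoff i j hij, abs_mul, abs_of_nonneg h0]
      have := hM i j
      nlinarith [abs_nonneg (M i j)]
  have hoffabs : ∀ i j, i ≠ j → |A i j| ≤ h * L := by
    intro i j hij
    rw [hoff i j hij, abs_mul, abs_of_nonneg h0]
    exact mul_le_mul_of_nonneg_left (hM i j) h0
  -- the determinant as a sum over permutations
  rw [Matrix.det_apply]
  rw [← Finset.add_sum_erase _ _ (Finset.mem_univ (1 : Equiv.Perm (Fin d)))]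
  have habs_term : ∀ σ : Equiv.Perm (Fin d),
      |Equiv.Perm.sign σ • ∏ i, A (σ i) i| = |∏ i, A (σ i) i| := by
    intro σ
    rcases Int.units_eq_one_or (Equiv.Perm.sign σ) with hs | hs <;>
      simp [hs, Units.smul_def]
  have hid : (Equiv.Perm.sign (1 : Equiv.Perm (Fin d))) • ∏ i, A ((1 : Equiv.Perm (Fin d)) i) i
      = ∏ i, (1 + h * M i i) := by
    simp [hdiag]
  -- bound on the identity term
  have hidbound : |∏ i, (1 + h * M i i) - 1 - h * M.trace| ≤ h^2 * ((d:ℝ)^2 * L^2 * (1+L)^d) := by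
    have key := prod_one_add_sub_one_sub_sum_le Finset.univ (fun i => h * M i i)
    have htr : h * M.trace = ∑ i, h * M i i := by
      rw [Matrix.trace, Finset.mul_sum]; rfl
    rw [htr]
    refine key.trans ?_
    have hsb : (∑ i, |h * M i i|) ≤ (d:ℝ) * (h * L) := by
      calc (∑ i : Fin d, |h * M i i|) ≤ ∑ _i : Fin d, h * L := by
            refine Finset.sum_le_sum fun i _ => ?_
            rw [abs_mul, abs_of_nonneg h0]
            exact mul_le_mul_of_nonneg_left (hM i i) h0
        _ = (d:ℝ) * (h * L) := by simp [Finset.sum_const, mul_comm]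
    have hpb : (∏ i, (1 + |h * M i i|)) ≤ (1+L)^d := by
      calc (∏ i : Fin d, (1 + |h * M i i|)) ≤ ∏ _i : Fin d, (1+L) := by
            refine Finset.prod_le_prod (fun i _ => by positivity) fun i _ => ?_
            have : |h * M i i| ≤ L := by
              rw [abs_mul, abs_of_nonneg h0]
              calc h * |M i i| ≤ 1 * L := by
                    exact mul_le_mul h1 (hM i i) (abs_nonneg _) zero_le_one
                _ = L := one_mul L
            linarith
        _ = (1+L)^d := by simp
    have hs0 : (0:ℝ) ≤ ∑ i, |h * M i i| := Finset.sum_nonneg fun i _ => abs_nonneg _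
    have hp0 : (0:ℝ) ≤ ∏ i, (1 + |h * M i i|) :=
      Finset.prod_nonneg fun i _ => by positivity
    calc (∑ i, |h * M i i|)^2 * ∏ i, (1 + |h * M i i|)
        ≤ ((d:ℝ) * (h * L))^2 * (1+L)^d := by
          refine mul_le_mul (by nlinarith) hpb hp0 (by positivity)
      _ = h^2 * ((d:ℝ)^2 * L^2 * (1+L)^d) := by ring
  -- bound on the non-identity terms
  have hterm : ∀ σ : Equiv.Perm (Fin d), σ ≠ 1 → |∏ i, A (σ i) i| ≤ h^2 * (L^2 * (1+L)^d) := by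
    intro σ hσ
    obtain ⟨i₀, hi₀⟩ : ∃ i, σ i ≠ i := by
      by_contra hcon
      push_neg at hcon
      exact hσ (Equiv.ext fun i => hcon i)
    set j₀ := σ i₀ with hj₀
    have hj₀ne : j₀ ≠ i₀ := hi₀
    have hσj₀ : σ j₀ ≠ j₀ := fun hcon => hj₀ne (σ.injective (hcon.trans hj₀))
    have hmem : j₀ ∈ (Finset.univ : Finset (Fin d)).erase i₀ :=
      Finset.mem_erase.2 ⟨hj₀ne, Finset.mem_univ _⟩
    rw [Finset.abs_prod]
    rw [← Finset.mul_prod_erase _ _ (Finset.mem_univ i₀),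
        ← Finset.mul_prod_erase _ _ hmem]
    have hb1 : |A (σ i₀) i₀| ≤ h * L := hoffabs _ _ hi₀
    have hb2 : |A (σ j₀) j₀| ≤ h * L := hoffabs _ _ hσj₀
    have hb3 : (∏ i ∈ ((Finset.univ : Finset (Fin d)).erase i₀).erase j₀, |A (σ i) i|)
        ≤ (1+L)^d := by
      calc (∏ i ∈ ((Finset.univ : Finset (Fin d)).erase i₀).erase j₀, |A (σ i) i|)
          ≤ ∏ _i ∈ ((Finset.univ : Finset (Fin d)).erase i₀).erase j₀, (1+L) :=
            Finset.prod_le_prod (fun i _ => abs_nonneg _) fun i _ => habs _ _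
        _ = (1+L)^(((Finset.univ : Finset (Fin d)).erase i₀).erase j₀).card := by
            rw [Finset.prod_const]
        _ ≤ (1+L)^d := by
            refine pow_le_pow_right₀ (by linarith) ?_
            calc (((Finset.univ : Finset (Fin d)).erase i₀).erase j₀).card
                ≤ (Finset.univ : Finset (Fin d)).card := by
                  refine Finset.card_le_card fun i hi => Finset.mem_univ _
              _ = d := by simp
    have hprod0 : (0:ℝ) ≤ ∏ i ∈ ((Finset.univ : Finset (Fin d)).erase i₀).erase j₀, |A (σ i) i| :=
      Finset.prod_nonneg fun i _ => abs_nonneg _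
    calc |A (σ i₀) i₀| * (|A (σ j₀) j₀| * ∏ i ∈ ((Finset.univ : Finset (Fin d)).erase i₀).erase j₀, |A (σ i) i|)
        ≤ (h*L) * ((h*L) * (1+L)^d) := by
          refine mul_le_mul hb1 ?_ (by positivity) (by positivity)
          exact mul_le_mul hb2 hb3 hprod0 (by positivity)
      _ = h^2 * (L^2 * (1+L)^d) := by ring
  -- combine
  have hsum2 : |∑ σ ∈ (Finset.univ : Finset (Equiv.Perm (Fin d))).erase 1,
      Equiv.Perm.sign σ • ∏ i, A (σ i) i| ≤ (d.factorial : ℝ) * (h^2 * (L^2 * (1+L)^d)) := by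
    calc |∑ σ ∈ (Finset.univ : Finset (Equiv.Perm (Fin d))).erase 1,
        Equiv.Perm.sign σ • ∏ i, A (σ i) i|
        ≤ ∑ σ ∈ (Finset.univ : Finset (Equiv.Perm (Fin d))).erase 1,
            |Equiv.Perm.sign σ • ∏ i, A (σ i) i| := Finset.abs_sum_le_sum_abs _ _
      _ ≤ ∑ σ ∈ (Finset.univ : Finset (Equiv.Perm (Fin d))).erase 1,
            (h^2 * (L^2 * (1+L)^d)) := by
          refine Finset.sum_le_sum fun σ hσ => ?_
          rw [habs_term σ]
          exact hterm σ (Finset.mem_erase.1 hσ).1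
      _ = ((Finset.univ : Finset (Equiv.Perm (Fin d))).erase 1).card
            * (h^2 * (L^2 * (1+L)^d)) := by rw [Finset.sum_const, nsmul_eq_mul]
      _ ≤ (d.factorial : ℝ) * (h^2 * (L^2 * (1+L)^d)) := by
          refine mul_le_mul_of_nonneg_right ?_ (by positivity)
          have : ((Finset.univ : Finset (Equiv.Perm (Fin d))).erase 1).card
              ≤ (Finset.univ : Finset (Equiv.Perm (Fin d))).card :=
            Finset.card_le_card fun i hi => Finset.mem_univ _
          have hcard : (Finset.univ : Finset (Equiv.Perm (Fin d))).card = d.factorial := by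
            rw [Finset.card_univ, Fintype.card_perm, Fintype.card_fin]
          exact_mod_cast hcard ▸ this
  rw [hid]
  have expand : ∏ i, (1 + h * M i i) + (∑ σ ∈ (Finset.univ : Finset (Equiv.Perm (Fin d))).erase 1,
      Equiv.Perm.sign σ • ∏ i, A (σ i) i) - 1 - h * M.trace
    = (∏ i, (1 + h * M i i) - 1 - h * M.trace) + ∑ σ ∈ (Finset.univ : Finset (Equiv.Perm (Fin d))).erase 1,
      Equiv.Perm.sign σ • ∏ i, A (σ i) i := by ring
  rw [expand]
  calc |(∏ i, (1 + h * M i i) - 1 - h * M.trace) + ∑ σ ∈ (Finset.univ : Finset (Equiv.Perm (Fin d))).erase 1,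
      Equiv.Perm.sign σ • ∏ i, A (σ i) i|
      ≤ |∏ i, (1 + h * M i i) - 1 - h * M.trace| + |∑ σ ∈ (Finset.univ : Finset (Equiv.Perm (Fin d))).erase 1,
        Equiv.Perm.sign σ • ∏ i, A (σ i) i| := abs_add_le _ _
    _ ≤ h^2 * ((d:ℝ)^2 * L^2 * (1+L)^d) + (d.factorial : ℝ) * (h^2 * (L^2 * (1+L)^d)) := by
        exact add_le_add hidbound hsum2
    _ = h^2 * detC d L := by unfold detC; ring

lemma clm_det_ge (d : ℕ) (L c h : ℝ) (hL : 0 ≤ L) (h0 : 0 ≤ h) (h1 : h ≤ 1)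
    (A : (Fin d → ℝ) →L[ℝ] (Fin d → ℝ)) (hA : ‖A‖ ≤ L)
    (htr : -c ≤ ∑ i, A (Pi.single i 1) i) :
    1 - h * c - h^2 * detC d L ≤ (ContinuousLinearMap.id ℝ (Fin d → ℝ) + h • A).det := by
  classical
  set bb := Pi.basisFun ℝ (Fin d)
  set B := LinearMap.toMatrix bb bb (A : (Fin d → ℝ) →ₗ[ℝ] (Fin d → ℝ)) with hB
  have hBentry : ∀ i j, B i j = A (Pi.single j 1) i := by
    intro i j
    rw [hB, LinearMap.toMatrix_apply]
    simp [bb]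
  have hMbound : ∀ i j, |B i j| ≤ L := by
    intro i j
    rw [hBentry]
    have h1' : ‖(Pi.single j 1 : Fin d → ℝ)‖ ≤ 1 := by
      rw [pi_norm_le_iff_of_nonneg zero_le_one]
      intro i'
      rcases eq_or_ne i' j with rfl | hne
      · simp
      · simp [Pi.single_eq_of_ne hne]
    calc |A (Pi.single j 1) i| ≤ ‖A (Pi.single j 1)‖ := by
          rw [← Real.norm_eq_abs]; exact norm_le_pi_norm _ i
      _ ≤ ‖A‖ * ‖(Pi.single j 1 : Fin d → ℝ)‖ := A.le_opNorm _
      _ ≤ L * 1 := mul_le_mul hA h1' (norm_nonneg _) hL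
      _ = L := mul_one L
  have htrB : -c ≤ B.trace := by
    rw [Matrix.trace]
    simpa [Matrix.diag, hBentry] using htr
  have hdet : (ContinuousLinearMap.id ℝ (Fin d → ℝ) + h • A).det = (1 + h • B).det := by
    rw [ContinuousLinearMap.det, ← LinearMap.det_toMatrix bb]
    congr 1
    have : ((ContinuousLinearMap.id ℝ (Fin d → ℝ) + h • A : (Fin d → ℝ) →L[ℝ] (Fin d → ℝ)) :
        (Fin d → ℝ) →ₗ[ℝ] (Fin d → ℝ))
        = LinearMap.id + h • (A : (Fin d → ℝ) →ₗ[ℝ] (Fin d → ℝ)) := by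
      rfl
    rw [this, map_add, _root_.map_smul, LinearMap.toMatrix_id]
  rw [hdet]
  have key := det_one_add_smul_sub_le d L h hL h0 h1 B hMbound
  have := abs_le.1 key
  nlinarith [mul_le_mul_of_nonneg_left htrB h0]

lemma euler_step_bound (d : ℕ) (c L : ℝ)
    (f : (Fin d → ℝ) → (Fin d → ℝ)) (hf : ContDiff ℝ 1 f)
    (hfD : ∀ x, ‖fderiv ℝ f x‖ ≤ L)
    (hfdiv : ∀ x, -c ≤ ∑ i, fderiv ℝ f x (Pi.single i 1) i)
    (h : ℝ) (h0 : 0 ≤ h) (h1 : h ≤ 1) (hsmall : h * L < 1)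
    (hpos : 0 < 1 - h * c - h^2 * detC d L)
    (g : (Fin d → ℝ) → ℝ≥0∞) (hg : Measurable g)
    (s : Set (Fin d → ℝ)) (hs : MeasurableSet s) :
    ∫⁻ x in s, g (x + h • f x) ≤
      (ENNReal.ofReal (1 - h * c - h^2 * detC d L))⁻¹ *
        ∫⁻ y in (fun x => x + h • f x) '' s, g y := by
  have hL : 0 ≤ L := le_trans (norm_nonneg _) (hfD 0)
  set Φ : (Fin d → ℝ) → (Fin d → ℝ) := fun x => x + h • f x with hΦdef
  set Φ' : (Fin d → ℝ) → ((Fin d → ℝ) →L[ℝ] (Fin d → ℝ)) :=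
    fun x => ContinuousLinearMap.id ℝ (Fin d → ℝ) + h • fderiv ℝ f x with hΦ'def
  have hder : ∀ x, HasFDerivAt Φ (Φ' x) x := by
    intro x
    exact (hasFDerivAt_id x).add (((hf.differentiable one_ne_zero) x).hasFDerivAt.const_smul h)
  have hLip : ∀ x y : Fin d → ℝ, ‖f x - f y‖ ≤ L * ‖x - y‖ := by
    intro x y
    exact Convex.norm_image_sub_le_of_norm_fderiv_le
      (fun z _ => (hf.differentiable one_ne_zero) z)
      (fun z _ => hfD z) convex_univ (mem_univ y) (mem_univ x)
  have hInj : Set.InjOn Φ s := by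
    intro x hx y hy hxy
    have hxy' : x - y = h • (f y - f x) := by
      have : x + h • f x = y + h • f y := hxy
      have h2 : x + h • f x = y + h • f y := hxy
      linear_combination (norm := module) h2
    by_contra hne
    have hnorm : ‖x - y‖ ≤ h * L * ‖x - y‖ := by
      calc ‖x - y‖ = ‖h • (f y - f x)‖ := by rw [hxy']
        _ = h * ‖f y - f x‖ := by rw [norm_smul, Real.norm_eq_abs, abs_of_nonneg h0]
        _ ≤ h * (L * ‖y - x‖) := by
            exact mul_le_mul_of_nonneg_left (hLip y x) h0
        _ = h * L * ‖x - y‖ := by rw [norm_sub_rev]; ring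
    have hpos' : 0 < ‖x - y‖ := by
      rw [norm_pos_iff]; exact sub_ne_zero_of_ne hne
    nlinarith
  have hdet : ∀ x, ENNReal.ofReal (1 - h * c - h^2 * detC d L) ≤ ENNReal.ofReal |(Φ' x).det| := by
    intro x
    refine ENNReal.ofReal_le_ofReal ?_
    have := clm_det_ge d L c h hL h0 h1 (fderiv ℝ f x) (hfD x) (hfdiv x)
    exact le_trans this (le_abs_self _)
  have hcov := lintegral_image_eq_lintegral_abs_det_fderiv_mul volume hs
    (fun x _ => (hder x).hasFDerivWithinAt) hInj g
  have hΦcont : Continuous Φ := by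
    exact continuous_id.add ((hf.continuous).const_smul h)
  have hmeas : Measurable fun x => g (Φ x) := hg.comp hΦcont.measurable
  have step : ENNReal.ofReal (1 - h * c - h^2 * detC d L) * ∫⁻ x in s, g (Φ x)
      ≤ ∫⁻ y in Φ '' s, g y := by
    rw [hcov, ← lintegral_const_mul _ hmeas]
    refine lintegral_mono fun x => ?_
    exact mul_le_mul_left (hdet x) _
  have hne0 : ENNReal.ofReal (1 - h * c - h^2 * detC d L) ≠ 0 := by
    simp only [ne_eq, ENNReal.ofReal_eq_zero, not_le]; linarith
  have hneT : ENNReal.ofReal (1 - h * c - h^2 * detC d L) ≠ ⊤ := ENNReal.ofReal_ne_top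
  rw [← ENNReal.div_eq_inv_mul]
  rw [ENNReal.le_div_iff_mul_le (Or.inl hne0) (Or.inl hneT), mul_comm]
  exact step

noncomputable def eulerIter {d : ℕ} (b : ℝ × (Fin d → ℝ) → Fin d → ℝ) (h : ℝ) :
    ℕ → ℕ → (Fin d → ℝ) → (Fin d → ℝ)
  | 0, _, x => x
  | m+1, j, x => eulerIter b h m (j+1) (x + h • b (j * h, x))

lemma eulerIter_cont {d : ℕ} (b : ℝ × (Fin d → ℝ) → Fin d → ℝ) (h : ℝ)
    (hbC1 : ∀ t : ℝ, ContDiff ℝ 1 (fun y => b (t, y))) (m j : ℕ) :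
    Continuous (eulerIter b h m j) := by
  induction m generalizing j with
  | zero => exact continuous_id
  | succ m ih =>
    show Continuous fun x => eulerIter b h m (j+1) (x + h • b (j * h, x))
    exact (ih (j+1)).comp (continuous_id.add (((hbC1 (j*h)).continuous).const_smul h))

lemma eulerIter_norm {d : ℕ} (b : ℝ × (Fin d → ℝ) → Fin d → ℝ) (h M : ℝ)
    (h0 : 0 ≤ h) (hbB : ∀ p, ‖b p‖ ≤ M) (m j : ℕ) (x : Fin d → ℝ) :
    ‖eulerIter b h m j x‖ ≤ ‖x‖ + m * (h * M) := by
  induction m generalizing j x with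
  | zero => simp [eulerIter]
  | succ m ih =>
    show ‖eulerIter b h m (j+1) (x + h • b (j * h, x))‖ ≤ ‖x‖ + (m+1 : ℕ) * (h * M)
    refine (ih (j+1) _).trans ?_
    have : ‖x + h • b (j * h, x)‖ ≤ ‖x‖ + h * M := by
      calc ‖x + h • b (j * h, x)‖ ≤ ‖x‖ + ‖h • b (j * h, x)‖ := norm_add_le _ _
        _ ≤ ‖x‖ + h * M := by
            rw [norm_smul, Real.norm_eq_abs, abs_of_nonneg h0]
            exact add_le_add_right (mul_le_mul_of_nonneg_left (hbB _) h0) _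
    push_cast
    linarith

lemma euler_iter_bound (d : ℕ) (c L M h : ℝ) (hM : 0 ≤ M)
    (b : ℝ × (Fin d → ℝ) → Fin d → ℝ)
    (hbC1 : ∀ t : ℝ, ContDiff ℝ 1 (fun y => b (t, y)))
    (hbB : ∀ p, ‖b p‖ ≤ M)
    (hfD : ∀ (t : ℝ) x, ‖fderiv ℝ (fun y => b (t, y)) x‖ ≤ L)
    (hfdiv : ∀ (t : ℝ) x, -c ≤ ∑ i, fderiv ℝ (fun y => b (t,y)) x (Pi.single i 1) i)
    (h0 : 0 ≤ h) (h1 : h ≤ 1) (hsmall : h * L < 1)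
    (hpos : 0 < 1 - h * c - h^2 * detC d L)
    (g : (Fin d → ℝ) → ℝ≥0∞) (hg : Measurable g) :
    ∀ (m j : ℕ) (r : ℝ),
      ∫⁻ x in Metric.ball (0 : Fin d → ℝ) r, g (eulerIter b h m j x) ≤
        ((ENNReal.ofReal (1 - h * c - h^2 * detC d L))⁻¹)^m *
          ∫⁻ y in Metric.ball (0 : Fin d → ℝ) (r + m * (h * M)), g y := by
  intro m
  induction m with
  | zero => intro j r; simp [eulerIter]
  | succ m ih =>
    intro j r
    have key := euler_step_bound d c L (fun y => b (j * h, y)) (hbC1 _) (hfD _) (hfdiv _)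
      h h0 h1 hsmall hpos (fun y => g (eulerIter b h m (j+1) y))
      ((hg.comp (eulerIter_cont b h hbC1 m (j+1)).measurable))
      (Metric.ball (0 : Fin d → ℝ) r) measurableSet_ball
    have himg : (fun x => x + h • b (j * h, x)) '' Metric.ball (0 : Fin d → ℝ) r
        ⊆ Metric.ball (0 : Fin d → ℝ) (r + h * M) := by
      rintro - ⟨x, hx, rfl⟩
      rw [Metric.mem_ball, dist_zero_right] at hx ⊢
      calc ‖x + h • b (j * h, x)‖ ≤ ‖x‖ + ‖h • b (j * h, x)‖ := norm_add_le _ _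
        _ ≤ ‖x‖ + h * M := by
            rw [norm_smul, Real.norm_eq_abs, abs_of_nonneg h0]
            exact add_le_add_right (mul_le_mul_of_nonneg_left (hbB _) h0) _
        _ < r + h * M := by linarith
    calc ∫⁻ x in Metric.ball (0 : Fin d → ℝ) r, g (eulerIter b h (m+1) j x)
        = ∫⁻ x in Metric.ball (0 : Fin d → ℝ) r,
            (fun y => g (eulerIter b h m (j+1) y)) (x + h • b (j * h, x)) := rfl
      _ ≤ (ENNReal.ofReal (1 - h * c - h^2 * detC d L))⁻¹ *
            ∫⁻ y in (fun x => x + h • b (j * h, x)) '' Metric.ball (0 : Fin d → ℝ) r,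
              g (eulerIter b h m (j+1) y) := key
      _ ≤ (ENNReal.ofReal (1 - h * c - h^2 * detC d L))⁻¹ *
            ∫⁻ y in Metric.ball (0 : Fin d → ℝ) (r + h * M), g (eulerIter b h m (j+1) y) := by
          exact mul_le_mul_right (lintegral_mono_set himg) _
      _ ≤ (ENNReal.ofReal (1 - h * c - h^2 * detC d L))⁻¹ *
            (((ENNReal.ofReal (1 - h * c - h^2 * detC d L))⁻¹)^m *
              ∫⁻ y in Metric.ball (0 : Fin d → ℝ) (r + h * M + m * (h * M)), g y) := by
          exact mul_le_mul_right (ih (j+1) (r + h * M)) _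
      _ = ((ENNReal.ofReal (1 - h * c - h^2 * detC d L))⁻¹)^(m+1) *
            ∫⁻ y in Metric.ball (0 : Fin d → ℝ) (r + (m+1 : ℕ) * (h * M)), g y := by
          rw [← mul_assoc, ← pow_succ']
          congr 2
          push_cast
          ring

lemma eulerIter_succ {d : ℕ} (b : ℝ × (Fin d → ℝ) → Fin d → ℝ) (h : ℝ) (m j : ℕ)
    (x : Fin d → ℝ) :
    eulerIter b h (m+1) j x
      = eulerIter b h m j x + h • b (((j+m : ℕ) : ℝ) * h, eulerIter b h m j x) := by
  induction m generalizing j x with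
  | zero => simp [eulerIter]
  | succ m ih =>
    show eulerIter b h (m+1) (j+1) (x + h • b (j * h, x)) = _
    rw [ih (j+1)]
    have : ((j + 1 + m : ℕ) : ℝ) = ((j + (m+1) : ℕ) : ℝ) := by push_cast; ring
    rw [this]
    rfl

lemma euler_converges (d : ℕ) (Tstar : ℝ) (M L : ℝ) (hM : 0 ≤ M) (hL : 0 ≤ L)
    (b : ℝ × (Fin d → ℝ) → Fin d → ℝ) (hbCont : Continuous b)
    (hbB : ∀ p, ‖b p‖ ≤ M)
    (hfD : ∀ (t : ℝ) (x : Fin d → ℝ), ‖fderiv ℝ (fun y => b (t, y)) x‖ ≤ L)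
    (hbC1 : ∀ t : ℝ, ContDiff ℝ 1 (fun y => b (t, y)))
    (X : ℝ → (Fin d → ℝ) → Fin d → ℝ)
    (hX0 : ∀ x, X 0 x = x)
    (hXode : ∀ (x : Fin d → ℝ), ∀ s ∈ Set.Ico (0:ℝ) Tstar,
      HasDerivAt (fun u => X u x) (b (s, X s x)) s)
    (t : ℝ) (ht0 : 0 < t) (htT : t < Tstar) (x : Fin d → ℝ) :
    Filter.Tendsto (fun n : ℕ => eulerIter b (t/n) n 0 x) Filter.atTop (𝓝 (X t x)) := by
  -- derivative facts on [0,t]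
  have hIcoSub : Icc (0:ℝ) t ⊆ Ico (0:ℝ) Tstar := fun s hs => ⟨hs.1, lt_of_le_of_lt hs.2 htT⟩
  have hDeriv : ∀ s ∈ Icc (0:ℝ) t, HasDerivWithinAt (fun u => X u x) (b (s, X s x)) (Icc 0 t) s :=
    fun s hs => (hXode x s (hIcoSub hs)).hasDerivWithinAt
  -- (a) trajectory bound
  have htraj : ∀ s ∈ Icc (0:ℝ) t, ‖X s x - x‖ ≤ M * s := by
    intro s hs
    have := (convex_Icc (0:ℝ) t).norm_image_sub_le_of_norm_hasDerivWithin_le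
      hDeriv (fun u hu => hbB _) (left_mem_Icc.2 ht0.le) hs
    simpa [hX0 x, Real.norm_eq_abs, abs_of_nonneg hs.1] using this
  have htrajB : ∀ s ∈ Icc (0:ℝ) t, ‖X s x‖ ≤ ‖x‖ + t * M := by
    intro s hs
    have h1 := htraj s hs
    have : ‖X s x‖ ≤ ‖X s x - x‖ + ‖x‖ := by
      simpa using norm_add_le (X s x - x) x
    have hMs : M * s ≤ t * M := by nlinarith [hs.2, hs.1]
    linarith
  -- Lipschitz of b in space
  have hLip : ∀ (τ : ℝ) (y z : Fin d → ℝ), ‖b (τ, y) - b (τ, z)‖ ≤ L * ‖y - z‖ := by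
    intro τ y z
    exact Convex.norm_image_sub_le_of_norm_fderiv_le
      (fun w _ => ((hbC1 τ).differentiable one_ne_zero) w)
      (fun w _ => hfD τ w) convex_univ (mem_univ z) (mem_univ y)
  -- (c) uniform continuity on a compact set
  set K : Set (ℝ × (Fin d → ℝ)) :=
    Icc (0:ℝ) t ×ˢ Metric.closedBall (0 : Fin d → ℝ) (‖x‖ + t * M) with hK
  have hKcompact : IsCompact K := (isCompact_Icc).prod (isCompact_closedBall _ _)
  have hbUC : UniformContinuousOn b K :=
    hKcompact.uniformContinuousOn_of_continuous hbCont.continuousOn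
  rw [Metric.tendsto_atTop]
  intro εt hεt
  -- choose ε, δ
  set CC : ℝ := t * Real.exp (L * t) + 1 with hCC
  have hCCpos : 0 < CC := by positivity
  set ε : ℝ := εt / (2 * CC) with hε
  have hεpos : 0 < ε := by positivity
  obtain ⟨δ, hδpos, hδ⟩ := (Metric.uniformContinuousOn_iff).1 hbUC ε hεpos
  -- choose N
  obtain ⟨N₀, hN₀⟩ := exists_nat_gt (t * (1 + M) / δ)
  set N : ℕ := max N₀ 1 with hN
  refine ⟨N, fun n hn => ?_⟩
  have hn1 : 1 ≤ n := le_trans (le_max_right _ _) hn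
  have hnpos : (0:ℝ) < n := by exact_mod_cast hn1
  set h : ℝ := t / n with hh
  have h0 : 0 < h := div_pos ht0 hnpos
  have hnh : (n : ℝ) * h = t := by rw [hh]; field_simp
  have hsmalldelta : h * (1 + M) < δ := by
    have hN₀n : (N₀ : ℝ) ≤ n := by exact_mod_cast le_trans (le_max_left _ _) hn
    have : t * (1 + M) / δ < n := lt_of_lt_of_le hN₀ hN₀n
    have h2 : t * (1 + M) < n * δ := by
      rw [div_lt_iff₀ hδpos] at this; linarith
    rw [hh]
    rw [div_mul_eq_mul_div, div_lt_iff₀ hnpos]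
    linarith [mul_comm (n:ℝ) δ]
  have hhδ : h < δ := by nlinarith
  have hhMδ : h * M < δ := by nlinarith
  -- general trajectory increments
  have htraj2 : ∀ a ∈ Icc (0:ℝ) t, ∀ s ∈ Icc (0:ℝ) t, ‖X s x - X a x‖ ≤ M * |s - a| := by
    intro a ha s hs
    have := (convex_Icc (0:ℝ) t).norm_image_sub_le_of_norm_hasDerivWithin_le
      hDeriv (fun u hu => hbB _) ha hs
    simpa [Real.norm_eq_abs] using this
  -- Euler points
  set y : ℕ → (Fin d → ℝ) := fun k => eulerIter b h k 0 x with hy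
  have hyB : ∀ k : ℕ, k ≤ n → ‖y k‖ ≤ ‖x‖ + t * M := by
    intro k hk
    refine (eulerIter_norm b h M h0.le hbB k 0 x).trans ?_
    have hkn : (k:ℝ) ≤ n := by exact_mod_cast hk
    have : (k:ℝ) * (h * M) ≤ t * M := by
      calc (k:ℝ) * (h * M) ≤ (n:ℝ) * (h * M) := mul_le_mul_of_nonneg_right hkn (by positivity)
        _ = t * M := by rw [← mul_assoc, hnh]
    linarith
  -- error recursion
  have key : ∀ k : ℕ, k ≤ n → ‖y k - X ((k:ℝ) * h) x‖ ≤ ε * h * k * (1 + h*L)^k := by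
    intro k
    induction k with
    | zero => intro _; simp [hy, eulerIter, hX0 x]
    | succ k ih =>
      intro hk1
      have hkn : k ≤ n := le_trans (Nat.le_succ k) hk1
      have ihk := ih hkn
      set a : ℝ := (k:ℝ) * h with ha
      set a' : ℝ := ((k+1 : ℕ):ℝ) * h with ha'
      have haa' : a' = a + h := by rw [ha', ha]; push_cast; ring
      have ha0 : 0 ≤ a := by positivity
      have ha't : a' ≤ t := by
        rw [ha']
        have : ((k+1:ℕ):ℝ) ≤ n := by exact_mod_cast hk1
        calc ((k+1:ℕ):ℝ) * h ≤ (n:ℝ) * h := by nlinarith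
          _ = t := hnh
      have haIcc : a ∈ Icc (0:ℝ) t := ⟨ha0, by nlinarith⟩
      have ha'Icc : a' ∈ Icc (0:ℝ) t := ⟨by nlinarith, ha't⟩
      set v : Fin d → ℝ := b (a, X a x) with hv
      -- step 1 : ODE increment close to Euler increment
      have step1 : ‖X a' x - X a x - h • v‖ ≤ ε * h := by
        have hsub : Icc a a' ⊆ Icc (0:ℝ) t := Icc_subset_Icc ha0 ha't
        have hg : ∀ s ∈ Icc a a', HasDerivWithinAt (fun u => X u x - u • v)
            (b (s, X s x) - v) (Icc a a') s := by
          intro s hs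
          have h1 : HasDerivWithinAt (fun u => X u x) (b (s, X s x)) (Icc a a') s :=
            (hXode x s (hIcoSub (hsub hs))).hasDerivWithinAt
          have h2 : HasDerivWithinAt (fun u : ℝ => u • v) v (Icc a a') s := by
            simpa using ((hasDerivAt_id s).smul_const v).hasDerivWithinAt
          exact h1.sub h2
        have hbound : ∀ s ∈ Icc a a', ‖b (s, X s x) - v‖ ≤ ε := by
          intro s hs
          have hsIcc : s ∈ Icc (0:ℝ) t := hsub hs
          have hp : (s, X s x) ∈ K := by
            refine ⟨hsIcc, ?_⟩
            rw [Metric.mem_closedBall, dist_zero_right]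
            exact htrajB s hsIcc
          have hq : (a, X a x) ∈ K := by
            refine ⟨haIcc, ?_⟩
            rw [Metric.mem_closedBall, dist_zero_right]
            exact htrajB a haIcc
          have hd : dist (s, X s x) (a, X a x) < δ := by
            rw [Prod.dist_eq]
            refine max_lt ?_ ?_
            · rw [Real.dist_eq]
              have : |s - a| ≤ h := by
                rw [abs_le]; constructor <;> [linarith [hs.1]; linarith [hs.2, haa']]
              linarith
            · rw [dist_eq_norm]
              show ‖X s x - X a x‖ < δ
              have : |s - a| ≤ h := by
                rw [abs_le]; constructor <;> [linarith [hs.1]; linarith [hs.2, haa']]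
              calc ‖X s x - X a x‖ ≤ M * |s - a| := htraj2 a haIcc s hsIcc
                _ ≤ M * h := by nlinarith
                _ < δ := by nlinarith
          have := hδ (s, X s x) hp (a, X a x) hq hd
          rw [dist_eq_norm] at this
          exact this.le
        have := (convex_Icc a a').norm_image_sub_le_of_norm_hasDerivWithin_le
          hg hbound (left_mem_Icc.2 (by linarith [haa'])) (right_mem_Icc.2 (by linarith [haa']))
        have heq : X a' x - a' • v - (X a x - a • v) = X a' x - X a x - h • v := by
          rw [haa', add_smul]; abel
        rw [heq] at this
        refine this.trans ?_
        rw [Real.norm_eq_abs, haa']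
        rw [show a + h - a = h by ring, abs_of_nonneg h0.le]
      -- step 2 : Lipschitz control
      have step2 : ‖b (a, y k) - v‖ ≤ L * ‖y k - X a x‖ := hLip a (y k) (X a x)
      -- Euler recursion
      have hrec : y (k+1) = y k + h • b (a, y k) := by
        rw [hy]
        show eulerIter b h (k+1) 0 x = _
        rw [eulerIter_succ]
        norm_num [ha]
      have hsplit : y (k+1) - X a' x
          = (y k - X a x) + h • (b (a, y k) - v) + (X a x + h • v - X a' x) := by
        rw [hrec, smul_sub]; abel
      have hnorm : ‖y (k+1) - X a' x‖ ≤ ‖y k - X a x‖ + h * (L * ‖y k - X a x‖) + ε * h := by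
        rw [hsplit]
        calc ‖(y k - X a x) + h • (b (a, y k) - v) + (X a x + h • v - X a' x)‖
            ≤ ‖(y k - X a x) + h • (b (a, y k) - v)‖ + ‖X a x + h • v - X a' x‖ :=
              norm_add_le _ _
          _ ≤ ‖y k - X a x‖ + ‖h • (b (a, y k) - v)‖ + ‖X a x + h • v - X a' x‖ := by
              have := norm_add_le (y k - X a x) (h • (b (a, y k) - v))
              linarith
          _ ≤ ‖y k - X a x‖ + h * (L * ‖y k - X a x‖) + ε * h := by
              have h6 : ‖h • (b (a, y k) - v)‖ ≤ h * (L * ‖y k - X a x‖) := by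
                rw [norm_smul, Real.norm_eq_abs, abs_of_nonneg h0.le]
                exact mul_le_mul_of_nonneg_left step2 h0.le
              have h7 : ‖X a x + h • v - X a' x‖ ≤ ε * h := by
                have : X a x + h • v - X a' x = -(X a' x - X a x - h • v) := by abel
                rw [this, norm_neg]
                exact step1
              linarith
      -- conclude the induction step
      set ek : ℝ := ‖y k - X a x‖ with hek
      have hek0 : 0 ≤ ek := norm_nonneg _
      have hP1 : (1:ℝ) ≤ (1 + h*L)^k := one_le_pow₀ (by nlinarith)
      have hpow : (1 + h*L)^(k+1) = (1+h*L)^k * (1+h*L) := pow_succ _ _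
      have hcast : ((k+1:ℕ):ℝ) = (k:ℝ)+1 := by push_cast; ring
      have A1 : (1+h*L) * ek ≤ (1+h*L) * (ε*h*k*(1+h*L)^k) :=
        mul_le_mul_of_nonneg_left ihk (by nlinarith)
      have A2 : ε*h*1 ≤ ε*h*((1+h*L)^k*(1+h*L)) := by
        refine mul_le_mul_of_nonneg_left ?_ (by positivity)
        have h8 : (1:ℝ) ≤ 1 + h*L := by nlinarith
        calc (1:ℝ) = 1*1 := by ring
          _ ≤ (1+h*L)^k*(1+h*L) := mul_le_mul hP1 h8 zero_le_one (by positivity)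
      show ‖y (k+1) - X a' x‖ ≤ ε * h * ((k+1:ℕ):ℝ) * (1 + h*L)^(k+1)
      rw [hcast, hpow]
      nlinarith [hnorm, hek0]
  -- conclude
  have hyn := key n le_rfl
  rw [dist_eq_norm]
  show ‖y n - X t x‖ < εt
  have hXt : X ((n:ℝ)*h) x = X t x := by rw [hnh]
  have hpowE : (1+h*L)^n ≤ Real.exp (L*t) := by
    have h1 : (1+h*L) ≤ Real.exp (h*L) := by linarith [Real.add_one_le_exp (h*L)]
    calc (1+h*L)^n ≤ (Real.exp (h*L))^n := pow_le_pow_left₀ (by nlinarith) h1 n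
      _ = Real.exp ((n:ℝ)*(h*L)) := (Real.exp_nat_mul _ n).symm
      _ = Real.exp (L*t) := by rw [← mul_assoc, hnh, mul_comm]
  have hεhn : ε*h*(n:ℝ) = ε*t := by rw [mul_assoc, mul_comm h, hnh]
  have hfin : ‖y n - X t x‖ ≤ ε * t * Real.exp (L*t) := by
    calc ‖y n - X t x‖ = ‖y n - X ((n:ℝ)*h) x‖ := by rw [hXt]
      _ ≤ ε * h * n * (1 + h*L)^n := hyn
      _ ≤ ε * h * n * Real.exp (L*t) := by
          refine mul_le_mul_of_nonneg_left hpowE (by positivity)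
      _ = ε * t * Real.exp (L*t) := by rw [hεhn]
  have hlast : ε * t * Real.exp (L*t) < εt := by
    have h1 : ε * (t * Real.exp (L*t)) ≤ ε * CC := by
      refine mul_le_mul_of_nonneg_left ?_ hεpos.le
      rw [hCC]; linarith
    have h2 : ε * CC = εt / 2 := by
      rw [hε]; field_simp
    calc ε * t * Real.exp (L*t) = ε * (t * Real.exp (L*t)) := by ring
      _ ≤ εt / 2 := by rw [← h2]; exact h1
      _ < εt := by linarith
  exact lt_of_le_of_lt hfin hlast





/-- Let `b` be a bounded continuous vector field on `[0,T*) × ℝᵈ`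
(`ℝᵈ` carries the sup norm, being the Pi type `Fin d → ℝ`), `C¹` in the space variable
with bounded spatial derivative, whose spatial divergence is bounded below by `−c`, and
let `X` be its flow. Then for every radius `R ∈ (0,∞]`, every `t ∈ [0,T*)` and every
non-negative continuous `β`, `∫_{B_R} β(X(t,x)) dx ≤ e^{ct} ∫_{B_{R+tM}} β(x) dx`
(the case `R = ∞` being the inequality over all of `ℝᵈ`), and the flow at time `t`
expands the measure of measurable sets by a factor at most `e^{ct}`; in particular
preimages of null sets under `X(t,·)` are null. -/
theorem flow_anticoncentration
    (d : ℕ) (hd : 1 ≤ d) (Tstar : ℝ) (hTstar : 0 < Tstar) (c : ℝ) (hc : 0 ≤ c)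
    (b : ℝ × (Fin d → ℝ) → (Fin d → ℝ))
    (hbCont : Continuous b)
    (M : ℝ) (hM : 0 ≤ M) (hbBdd : ∀ p : ℝ × (Fin d → ℝ), ‖b p‖ ≤ M)
    (hbC1 : ∀ t : ℝ, ContDiff ℝ 1 (fun y => b (t, y)))
    (hbDBdd : ∃ C, ∀ (t : ℝ) (x : Fin d → ℝ), ‖fderiv ℝ (fun y => b (t, y)) x‖ ≤ C)
    (hdiv : ∀ (t : ℝ) (x : Fin d → ℝ),
        -c ≤ ∑ i : Fin d, fderiv ℝ (fun y => b (t, y)) x (Pi.single i 1) i)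
    (X : ℝ → (Fin d → ℝ) → (Fin d → ℝ))
    (hX0 : ∀ x, X 0 x = x)
    (hXode : ∀ (x : Fin d → ℝ), ∀ t ∈ Ico (0 : ℝ) Tstar,
        HasDerivAt (fun s => X s x) (b (t, X t x)) t) :
    (∀ R : ℝ, 0 < R → ∀ t ∈ Ico (0 : ℝ) Tstar,
        ∀ β : (Fin d → ℝ) → ℝ, Continuous β → (∀ x, 0 ≤ β x) →
          ∫⁻ x in Metric.ball (0 : Fin d → ℝ) R, ENNReal.ofReal (β (X t x)) ≤
            ENNReal.ofReal (Real.exp (c * t)) *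
              ∫⁻ x in Metric.ball (0 : Fin d → ℝ) (R + t * M), ENNReal.ofReal (β x)) ∧
    (∀ t ∈ Ico (0 : ℝ) Tstar,
        ∀ β : (Fin d → ℝ) → ℝ, Continuous β → (∀ x, 0 ≤ β x) →
          ∫⁻ x, ENNReal.ofReal (β (X t x)) ≤
            ENNReal.ofReal (Real.exp (c * t)) * ∫⁻ x, ENNReal.ofReal (β x)) ∧
    (∀ t ∈ Ico (0 : ℝ) Tstar, ∀ A : Set (Fin d → ℝ), MeasurableSet A →
        volume {x | X t x ∈ A} ≤ ENNReal.ofReal (Real.exp (c * t)) * volume A) ∧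
    (∀ t ∈ Ico (0 : ℝ) Tstar, ∀ A : Set (Fin d → ℝ), volume A = 0 →
        volume {x | X t x ∈ A} = 0) := by
  obtain ⟨C₀, hC₀⟩ := hbDBdd
  set L : ℝ := max C₀ 0 with hLdef
  have hL : 0 ≤ L := le_max_right _ _
  have hfD : ∀ (t : ℝ) (x : Fin d → ℝ), ‖fderiv ℝ (fun y => b (t, y)) x‖ ≤ L :=
    fun t x => (hC₀ t x).trans (le_max_left _ _)
  set CD : ℝ := detC d L with hCDdef
  have hCD : 0 ≤ CD := detC_nonneg d L hL
  -- measurability of the flow map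
  have hXmeas : ∀ t ∈ Ico (0:ℝ) Tstar, Measurable (X t) := by
    rintro t ⟨ht0, htT⟩
    rcases eq_or_lt_of_le ht0 with rfl | ht0'
    · have hXid : X 0 = fun x => x := funext hX0
      rw [hXid]; exact measurable_id
    · refine measurable_of_tendsto_metrizable
        (f := fun n : ℕ => eulerIter b (t/n) n 0) ?_ ?_
      · exact fun n => (eulerIter_cont b (t/n) hbC1 n 0).measurable
      · rw [tendsto_pi_nhds]
        intro x
        exact euler_converges d Tstar M L hM hL b hbCont hbBdd hfD hbC1 X hX0 hXode t ht0' htT x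
  -- PART 1
  have part1 : ∀ R : ℝ, 0 < R → ∀ t ∈ Ico (0 : ℝ) Tstar,
      ∀ β : (Fin d → ℝ) → ℝ, Continuous β → (∀ x, 0 ≤ β x) →
        ∫⁻ x in Metric.ball (0 : Fin d → ℝ) R, ENNReal.ofReal (β (X t x)) ≤
          ENNReal.ofReal (Real.exp (c * t)) *
            ∫⁻ x in Metric.ball (0 : Fin d → ℝ) (R + t * M), ENNReal.ofReal (β x) := by
    rintro R hR t ⟨ht0, htT⟩ β hβ hβ0
    rcases eq_or_lt_of_le ht0 with rfl | ht0'
    · simp only [hX0, mul_zero, zero_mul, Real.exp_zero, ENNReal.ofReal_one, one_mul, add_zero]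
      exact le_refl _
    set g : (Fin d → ℝ) → ℝ≥0∞ := fun y => ENNReal.ofReal (β y) with hgdef
    have hgmeas : Measurable g := ENNReal.measurable_ofReal.comp hβ.measurable
    set I : ℝ≥0∞ := ∫⁻ y in Metric.ball (0 : Fin d → ℝ) (R + t * M), g y with hIdef
    set φ : ℝ → ℝ := fun s => t*(c + CD*s) + 2*t*s*(c + CD*s)^2 with hφdef
    have hφcont : Continuous φ := by fun_prop
    have hts : Tendsto (fun n : ℕ => t/(n:ℝ)) atTop (𝓝 0) := tendsto_const_div_atTop_nhds_zero_nat t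
    have hts0 : ∀ n : ℕ, 0 ≤ t/(n:ℝ) := fun n => div_nonneg ht0'.le (Nat.cast_nonneg n)
    -- eventual smallness conditions
    have hevsmall : ∀ᶠ n : ℕ in atTop,
        1 ≤ n ∧ t/(n:ℝ) ≤ 1 ∧ (t/(n:ℝ))*L < 1 ∧ (t/(n:ℝ))*c + (t/(n:ℝ))^2*CD < 1/2 := by
      have e1 : ∀ᶠ n : ℕ in atTop, 1 ≤ n := eventually_ge_atTop 1
      have e2 : ∀ᶠ n : ℕ in atTop, t/(n:ℝ) < 1 :=
        hts.eventually_lt_const one_pos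
      have e3 : ∀ᶠ n : ℕ in atTop, (t/(n:ℝ))*L < 1 :=
        (hts.mul_const L).eventually_lt_const (by simpa using one_pos)
      have htu : Tendsto (fun n : ℕ => (t/(n:ℝ))*c + (t/(n:ℝ))^2*CD) atTop (𝓝 0) := by
        have := ((hts.mul_const c).add (((hts.pow 2)).mul_const CD))
        simpa using this
      have e4 : ∀ᶠ n : ℕ in atTop, (t/(n:ℝ))*c + (t/(n:ℝ))^2*CD < 1/2 :=
        htu.eventually_lt_const (by norm_num)
      filter_upwards [e1, e2, e3, e4] with n h1 h2 h3 h4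
      exact ⟨h1, h2.le, h3, h4⟩
    -- the per-n inequality
    have hIneq : ∀ᶠ n : ℕ in atTop,
        (∫⁻ x in Metric.ball (0 : Fin d → ℝ) R, g (eulerIter b (t/(n:ℝ)) n 0 x)) ≤
          ENNReal.ofReal (Real.exp (φ (t/(n:ℝ)))) * I := by
      filter_upwards [hevsmall] with n hn
      obtain ⟨hn1, hh1, hhL, hu2⟩ := hn
      set h : ℝ := t/(n:ℝ) with hhdef
      have h0 : 0 ≤ h := hts0 n
      have hnR : (0:ℝ) < n := by exact_mod_cast hn1
      have hnh : (n:ℝ) * h = t := by rw [hhdef]; field_simp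
      set u : ℝ := h*c + h^2*CD with hudef
      have hu0 : 0 ≤ u := by positivity
      have hκpos : 0 < 1 - h*c - h^2*CD := by rw [hudef] at hu2; linarith
      have key := euler_iter_bound d c L M h hM b hbC1 hbBdd hfD hdiv h0 hh1 hhL
        (by rw [← hCDdef]; linarith) g hgmeas n 0 R
      rw [← hCDdef] at key
      have hrad : R + (n:ℝ) * (h * M) = R + t * M := by rw [← mul_assoc, hnh]
      rw [hrad] at key
      refine key.trans ?_
      refine mul_le_mul_left ?_ I
      -- the factor bound
      have hexp : (1 - (h*c + h^2*CD))⁻¹ ≤ Real.exp (u + 2*u^2) := by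
        have he := Real.add_one_le_exp (u + 2*u^2)
        have h9 : 1 ≤ (1 - u) * Real.exp (u + 2*u^2) := by nlinarith
        rw [inv_eq_one_div, div_le_iff₀ (by linarith [hκpos])]
        rw [hudef] at h9
        linarith [h9]
      have hofr : (ENNReal.ofReal (1 - h * c - h^2 * CD))⁻¹
          ≤ ENNReal.ofReal (Real.exp (u + 2*u^2)) := by
        rw [← ENNReal.ofReal_inv_of_pos hκpos]
        refine ENNReal.ofReal_le_ofReal ?_
        have : 1 - h*c - h^2*CD = 1 - (h*c + h^2*CD) := by ring
        rw [this]
        exact hexp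
      calc ((ENNReal.ofReal (1 - h * c - h^2 * CD))⁻¹)^n
          ≤ (ENNReal.ofReal (Real.exp (u + 2*u^2)))^n := pow_le_pow_left' hofr n
        _ = ENNReal.ofReal ((Real.exp (u + 2*u^2))^n) := by
            rw [ENNReal.ofReal_pow (Real.exp_nonneg _)]
        _ = ENNReal.ofReal (Real.exp ((n:ℝ) * (u + 2*u^2))) := by
            rw [Real.exp_nat_mul]
        _ = ENNReal.ofReal (Real.exp (φ h)) := by
            congr 1
            have hid : (n:ℝ) * (u + 2*u^2) = φ h := by
              rw [hudef, hφdef]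
              have expand : (n:ℝ) * ((h*c + h^2*CD) + 2*(h*c + h^2*CD)^2)
                  = ((n:ℝ)*h) * ((c + CD*h) + 2*h*(c + CD*h)^2) := by ring
              rw [expand, hnh]
              ring
            rw [hid]
    -- limit of the RHS
    have hIfin : I ≠ ⊤ := by
      obtain ⟨z₀, hz₀mem, hz₀⟩ := (isCompact_closedBall (0 : Fin d → ℝ) (R + t*M)).exists_isMaxOn
        ⟨0, Metric.mem_closedBall_self (by positivity)⟩ hβ.continuousOn
      have hIbound : I ≤ ENNReal.ofReal (β z₀) * volume (Metric.ball (0 : Fin d → ℝ) (R + t*M)) := by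
        rw [hIdef, ← setLIntegral_const]
        refine setLIntegral_mono' measurableSet_ball fun y hy => ?_
        exact ENNReal.ofReal_le_ofReal (hz₀ (Metric.ball_subset_closedBall hy))
      refine ne_top_of_le_ne_top ?_ hIbound
      exact (ENNReal.mul_lt_top ENNReal.ofReal_lt_top measure_ball_lt_top).ne
    have hRHS : Tendsto (fun n : ℕ => ENNReal.ofReal (Real.exp (φ (t/(n:ℝ)))) * I) atTop
        (𝓝 (ENNReal.ofReal (Real.exp (c * t)) * I)) := by
      have h1 : Tendsto (fun n : ℕ => φ (t/(n:ℝ))) atTop (𝓝 (φ 0)) :=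
        (hφcont.tendsto 0).comp hts
      have hφ0 : φ 0 = c * t := by rw [hφdef]; ring
      rw [hφ0] at h1
      have h2 : Tendsto (fun n : ℕ => ENNReal.ofReal (Real.exp (φ (t/(n:ℝ))))) atTop
          (𝓝 (ENNReal.ofReal (Real.exp (c * t)))) :=
        (ENNReal.continuous_ofReal.tendsto _).comp ((Real.continuous_exp.tendsto _).comp h1)
      exact ENNReal.Tendsto.mul_const h2 (Or.inr hIfin)
    -- limit of the LHS by dominated convergence
    have hLHS : Tendsto (fun n : ℕ => ∫⁻ x in Metric.ball (0 : Fin d → ℝ) R,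
        g (eulerIter b (t/(n:ℝ)) n 0 x)) atTop
        (𝓝 (∫⁻ x in Metric.ball (0 : Fin d → ℝ) R, g (X t x))) := by
      obtain ⟨z₀, hz₀mem, hz₀⟩ := (isCompact_closedBall (0 : Fin d → ℝ) (R + t*M)).exists_isMaxOn
        ⟨0, Metric.mem_closedBall_self (by positivity)⟩ hβ.continuousOn
      refine tendsto_lintegral_of_dominated_convergence (fun _ => ENNReal.ofReal (β z₀)) ?_ ?_ ?_ ?_
      · exact fun n => hgmeas.comp (eulerIter_cont b (t/(n:ℝ)) hbC1 n 0).measurable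
      · intro n
        refine (ae_restrict_iff' measurableSet_ball).2 (Eventually.of_forall fun x hx => ?_)
        have hnorm := eulerIter_norm b (t/(n:ℝ)) M (hts0 n) hbBdd n 0 x
        have hprod : (n:ℝ) * ((t/(n:ℝ)) * M) ≤ t * M := by
          rcases Nat.eq_zero_or_pos n with rfl | hn
          · simp; positivity
          · have hnR : (0:ℝ) < n := by exact_mod_cast hn
            have : (n:ℝ) * ((t/(n:ℝ)) * M) = t * M := by field_simp
            rw [this]
        have hmem : eulerIter b (t/(n:ℝ)) n 0 x ∈ Metric.closedBall (0 : Fin d → ℝ) (R + t*M) := by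
          rw [Metric.mem_closedBall, dist_zero_right]
          rw [Metric.mem_ball, dist_zero_right] at hx
          linarith
        exact ENNReal.ofReal_le_ofReal (hz₀ hmem)
      · rw [lintegral_const, Measure.restrict_apply_univ]
        exact (ENNReal.mul_lt_top ENNReal.ofReal_lt_top measure_ball_lt_top).ne
      · refine (Eventually.of_forall fun x => ?_)
        have hconv := euler_converges d Tstar M L hM hL b hbCont hbBdd hfD hbC1 X hX0 hXode
          t ht0' htT x
        exact ((ENNReal.continuous_ofReal.tendsto _).comp ((hβ.tendsto _).comp hconv))
    exact le_of_tendsto_of_tendsto hLHS hRHS hIneq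
  -- PART 2
  have hsup : ∀ (f : (Fin d → ℝ) → ℝ≥0∞), Measurable f →
      ∫⁻ x, f x = ⨆ n : ℕ, ∫⁻ x in Metric.ball (0 : Fin d → ℝ) ((n:ℝ)+1), f x := by
    intro f hf
    have hpt : ∀ x, f x = ⨆ n : ℕ, (Metric.ball (0 : Fin d → ℝ) ((n:ℝ)+1)).indicator f x := by
      intro x
      refine le_antisymm ?_ (iSup_le fun n => Set.indicator_le_self _ _ x)
      obtain ⟨n, hn⟩ := exists_nat_gt ‖x‖
      refine le_iSup_of_le n ?_
      rw [Set.indicator_of_mem]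
      rw [Metric.mem_ball, dist_zero_right]
      linarith
    calc ∫⁻ x, f x
        = ∫⁻ x, ⨆ n : ℕ, (Metric.ball (0 : Fin d → ℝ) ((n:ℝ)+1)).indicator f x :=
          lintegral_congr fun x => hpt x
      _ = ⨆ n : ℕ, ∫⁻ x, (Metric.ball (0 : Fin d → ℝ) ((n:ℝ)+1)).indicator f x := by
          refine lintegral_iSup (fun n => hf.indicator measurableSet_ball) ?_
          intro n m hnm x
          refine Set.indicator_le_indicator_of_subset
            (Metric.ball_subset_ball (by exact_mod_cast add_le_add_left (Nat.cast_le.2 hnm) 1))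
            (fun a => zero_le) x
      _ = ⨆ n : ℕ, ∫⁻ x in Metric.ball (0 : Fin d → ℝ) ((n:ℝ)+1), f x :=
          iSup_congr fun n => lintegral_indicator measurableSet_ball f
  have part2 : ∀ t ∈ Ico (0 : ℝ) Tstar,
      ∀ β : (Fin d → ℝ) → ℝ, Continuous β → (∀ x, 0 ≤ β x) →
        ∫⁻ x, ENNReal.ofReal (β (X t x)) ≤
          ENNReal.ofReal (Real.exp (c * t)) * ∫⁻ x, ENNReal.ofReal (β x) := by
    intro t ht β hβ hβ0
    have hXm := hXmeas t ht
    have hfm : Measurable fun x => ENNReal.ofReal (β (X t x)) :=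
      ENNReal.measurable_ofReal.comp (hβ.measurable.comp hXm)
    rw [hsup _ hfm]
    refine iSup_le fun n => ?_
    refine (part1 ((n:ℝ)+1) (by positivity) t ht β hβ hβ0).trans ?_
    exact mul_le_mul_right (setLIntegral_le_lintegral _ _) _
  -- PART 3
  have part3 : ∀ t ∈ Ico (0 : ℝ) Tstar, ∀ A : Set (Fin d → ℝ), MeasurableSet A →
      volume {x | X t x ∈ A} ≤ ENNReal.ofReal (Real.exp (c * t)) * volume A := by
    intro t ht A hA
    have hXm := hXmeas t ht
    have hexpne : ENNReal.ofReal (Real.exp (c*t)) ≠ 0 := by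
      simp [Real.exp_pos]
    -- open sets with nonempty complement
    have hopen : ∀ U : Set (Fin d → ℝ), IsOpen U → Uᶜ.Nonempty →
        volume ((X t)⁻¹' U) ≤ ENNReal.ofReal (Real.exp (c*t)) * volume U := by
      intro U hU hUc
      set βm : ℕ → (Fin d → ℝ) → ℝ := fun m y => min 1 ((m:ℝ) * Metric.infDist y Uᶜ) with hβmdef
      have hβmc : ∀ m, Continuous (βm m) := fun m =>
        continuous_const.min (continuous_const.mul (Metric.continuous_infDist_pt Uᶜ))
      have hβm0 : ∀ m y, 0 ≤ βm m y := fun m y =>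
        le_min zero_le_one (mul_nonneg (Nat.cast_nonneg m) Metric.infDist_nonneg)
      have hβmle : ∀ m y, ENNReal.ofReal (βm m y) ≤ U.indicator (fun _ => (1:ℝ≥0∞)) y := by
        intro m y
        by_cases hy : y ∈ U
        · rw [Set.indicator_of_mem hy]
          calc ENNReal.ofReal (βm m y) ≤ ENNReal.ofReal 1 :=
              ENNReal.ofReal_le_ofReal (min_le_left _ _)
            _ = 1 := ENNReal.ofReal_one
        · have hzero : Metric.infDist y Uᶜ = 0 := Metric.infDist_zero_of_mem (by simpa using hy)
          rw [Set.indicator_of_notMem hy]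
          simp [hβmdef, hzero]
      have hptsup : ∀ y, (⨆ m : ℕ, ENNReal.ofReal (βm m y)) = U.indicator (fun _ => (1:ℝ≥0∞)) y := by
        intro y
        by_cases hy : y ∈ U
        · rw [Set.indicator_of_mem hy]
          refine le_antisymm (iSup_le fun m => (hβmle m y).trans_eq (Set.indicator_of_mem hy _)) ?_
          have hdpos : 0 < Metric.infDist y Uᶜ := by
            rw [← hU.isClosed_compl.notMem_iff_infDist_pos hUc]
            simpa using hy
          obtain ⟨m, hm⟩ := exists_nat_gt (1 / Metric.infDist y Uᶜ)
          refine le_iSup_of_le m ?_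
          have h1 : 1 ≤ (m:ℝ) * Metric.infDist y Uᶜ := by
            rw [div_lt_iff₀ hdpos] at hm
            linarith
          have heq : βm m y = 1 := min_eq_left h1
          rw [heq, ENNReal.ofReal_one]
        · rw [Set.indicator_of_notMem hy]
          have hzero : Metric.infDist y Uᶜ = 0 := Metric.infDist_zero_of_mem (by simpa using hy)
          simp [hβmdef, hzero]
      have hmono : Monotone (fun m : ℕ => fun x => ENNReal.ofReal (βm m (X t x))) := by
        intro m m' hmm
        intro x
        refine ENNReal.ofReal_le_ofReal (min_le_min (le_refl 1) ?_)
        exact mul_le_mul_of_nonneg_right (by exact_mod_cast hmm) Metric.infDist_nonneg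
      have hpre : volume ((X t)⁻¹' U) = ∫⁻ x, U.indicator (fun _ => (1:ℝ≥0∞)) (X t x) := by
        rw [← lintegral_indicator_one (hXm hU.measurableSet)]
        refine lintegral_congr fun x => ?_
        by_cases hx : X t x ∈ U
        · rw [Set.indicator_of_mem hx, Set.indicator_of_mem (show x ∈ (X t)⁻¹' U from hx)]; rfl
        · rw [Set.indicator_of_notMem hx,
            Set.indicator_of_notMem (show x ∉ (X t)⁻¹' U from hx)]
      
      rw [hpre]
      have hswap : ∫⁻ x, U.indicator (fun _ => (1:ℝ≥0∞)) (X t x)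
          = ⨆ m : ℕ, ∫⁻ x, ENNReal.ofReal (βm m (X t x)) :=
        calc ∫⁻ x, U.indicator (fun _ => (1:ℝ≥0∞)) (X t x)
            = ∫⁻ x, ⨆ m : ℕ, ENNReal.ofReal (βm m (X t x)) :=
              lintegral_congr fun x => (hptsup (X t x)).symm
          _ = ⨆ m : ℕ, ∫⁻ x, ENNReal.ofReal (βm m (X t x)) :=
              lintegral_iSup
                (fun m => ENNReal.measurable_ofReal.comp ((hβmc m).measurable.comp hXm)) hmono
      rw [hswap]
      refine iSup_le fun m => ?_
      refine (part2 t ht (βm m) (hβmc m) (fun y => hβm0 m y)).trans ?_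
      refine mul_le_mul_right ?_ _
      calc ∫⁻ y, ENNReal.ofReal (βm m y)
          ≤ ∫⁻ y, U.indicator (fun _ => (1:ℝ≥0∞)) y := lintegral_mono fun y => hβmle m y
        _ = volume U := lintegral_indicator_one hU.measurableSet
    -- outer regularity
    rcases eq_top_or_lt_top (volume A) with hAtop | hAfin
    · rw [hAtop, ENNReal.mul_top hexpne]
      exact le_top
    · refine ENNReal.le_of_forall_pos_le_add fun ε hε hfin => ?_
      have hεne : (ε : ℝ≥0∞) / ENNReal.ofReal (Real.exp (c*t)) ≠ 0 := by
        refine ENNReal.div_ne_zero.2 ⟨?_, ENNReal.ofReal_ne_top⟩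
        exact_mod_cast hε.ne'
      obtain ⟨U, hAU, hUopen, hUvol⟩ := Set.exists_isOpen_lt_add A hAfin.ne hεne
      have hUfin : volume U < ⊤ := by
        refine hUvol.trans_le ?_
        refine le_top.trans_eq ?_
        rfl
      have hUcne : Uᶜ.Nonempty := by
        rw [Set.nonempty_compl]
        intro hcon
        rw [hcon] at hUvol
        have huniv : volume (univ : Set (Fin d → ℝ)) = ⊤ := by
          rw [show (volume : Measure (Fin d → ℝ)) = Measure.pi fun _ => volume from rfl,
            Measure.pi_univ]
          simp [Real.volume_univ, ENNReal.top_pow, Nat.pos_iff_ne_zero.mp hd]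
        rw [huniv] at hUvol
        have : volume A + (ε : ℝ≥0∞) / ENNReal.ofReal (Real.exp (c*t)) < ⊤ := by
          refine ENNReal.add_lt_top.2 ⟨hAfin, ?_⟩
          exact ENNReal.div_lt_top ENNReal.coe_ne_top hexpne
        exact absurd (hUvol.trans this) (lt_irrefl ⊤)
      calc volume {x | X t x ∈ A}
          ≤ volume ((X t)⁻¹' U) := measure_mono fun x hx => hAU hx
        _ ≤ ENNReal.ofReal (Real.exp (c*t)) * volume U := hopen U hUopen hUcne
        _ ≤ ENNReal.ofReal (Real.exp (c*t)) *
              (volume A + (ε : ℝ≥0∞) / ENNReal.ofReal (Real.exp (c*t))) :=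
            mul_le_mul_right hUvol.le _
        _ = ENNReal.ofReal (Real.exp (c*t)) * volume A +
              ENNReal.ofReal (Real.exp (c*t)) *
                ((ε : ℝ≥0∞) / ENNReal.ofReal (Real.exp (c*t))) := mul_add _ _ _
        _ ≤ ENNReal.ofReal (Real.exp (c*t)) * volume A + ε :=
            add_le_add_right ENNReal.mul_div_le _
  -- PART 4
  have part4 : ∀ t ∈ Ico (0 : ℝ) Tstar, ∀ A : Set (Fin d → ℝ), volume A = 0 →
      volume {x | X t x ∈ A} = 0 := by
    intro t ht A hA0
    obtain ⟨B, hAB, hBmeas, hB0⟩ := exists_measurable_superset_of_null hA0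
    have h3 := part3 t ht B hBmeas
    rw [hB0, mul_zero] at h3
    have hsub : {x | X t x ∈ A} ⊆ {x | X t x ∈ B} := fun x hx => hAB hx
    exact le_antisymm (le_trans (measure_mono hsub) h3) zero_le
  exact ⟨part1, part2, part3, part4⟩
end

section
/- Let T > 0, let H : ℝ^d → ℝ be twice continuously differentiable and convex, let u : [0,T]×ℝ^d → ℝ be a Lipschitz function, differentiable everywhere with Lipschitz gradient, satisfying ∂_t u = H(∇_x u) at every point, and let f : [0,T]×ℝ^d → ℝ be a Lipschitz function. Let φ : [0,T] → ℝ^d be a Lipschitz curve satisfying φ'(t) = −∇H(∇_x u(t,φ(t))) for all t, and suppose that for almost every t ∈ (0,T), f is differentiable at (t,φ(t)) and ∂_t f(t,φ(t)) − H(∇_x f(t,φ(t))) = 0. Then the function t ↦ f(t,φ(t)) − u(t,φ(t)) is non-decreasing on [0,T]. -/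
open MeasureTheory Set Function
open scoped InnerProductSpace

section AuxLemmas

private lemma lipschitz_mono_of_ae_deriv_nonneg' {g : ℝ → ℝ} {K : NNReal} (hg : LipschitzWith K g)
    {a b : ℝ}
    (hae : ∀ᵐ t ∂(volume : Measure ℝ).restrict (Ioo a b), ∃ c, 0 ≤ c ∧ HasDerivAt g c t) :
    MonotoneOn g (Icc a b) := by
  set m : ℝ → ℝ := fun t => (K : ℝ) * t - g t with hm_def
  have hglip : ∀ x y : ℝ, x ≤ y → g y - g x ≤ (K : ℝ) * (y - x) := by
    intro x y hxy
    have := hg.dist_le_mul y x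
    rw [Real.dist_eq, Real.dist_eq] at this
    have h1 : g y - g x ≤ |g y - g x| := le_abs_self _
    have h2 : |y - x| = y - x := abs_of_nonneg (by linarith)
    rw [h2] at this
    linarith
  have hm : Monotone m := by
    intro x y hxy
    have := hglip x y hxy
    simp only [hm_def]
    nlinarith
  have hmc : Continuous m := (continuous_const.mul continuous_id).sub hg.continuous
  have hm2 : Monotone (fun t => (K : ℝ) * t + g t) := by
    intro x y hxy
    have := hglip y x
    have h3 : g x - g y ≤ (K : ℝ) * (y - x) := by
      rcases le_total x y with h | h
      · have := hg.dist_le_mul x y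
        rw [Real.dist_eq, Real.dist_eq] at this
        have h1 : g x - g y ≤ |g x - g y| := le_abs_self _
        have h2 : |x - y| = y - x := by rw [abs_sub_comm]; exact abs_of_nonneg (by linarith)
        rw [h2] at this
        linarith
      · have h4 : y = x := le_antisymm h hxy
        simp [h4]
    simp only []
    linarith
  have hm2c : Continuous (fun t => (K : ℝ) * t + g t) :=
    (continuous_const.mul continuous_id).add hg.continuous
  -- Stieltjes functions agree with the functions themselves (continuity)
  have hs1 : (hm.stieltjesFunction : ℝ → ℝ) = m := by
    funext x
    exact rightLim_eq_of_tendsto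
      ((hmc.tendsto x).mono_left nhdsWithin_le_nhds)
  have hs2 : (hm2.stieltjesFunction : ℝ → ℝ) = fun t => (K : ℝ) * t + g t := by
    funext x
    exact rightLim_eq_of_tendsto
      ((hm2c.tendsto x).mono_left nhdsWithin_le_nhds)
  set μ := hm.stieltjesFunction.measure with hμ_def
  -- μ + ν = (2K) • volume
  have hsum : hm.stieltjesFunction + hm2.stieltjesFunction
      = ((2 * K : NNReal)) • StieltjesFunction.id := by
    ext x
    show hm.stieltjesFunction x + hm2.stieltjesFunction x = _
    have : ((2 * K : NNReal) • StieltjesFunction.id) x = ((2 * K : NNReal) : ℝ) * x := rfl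
    rw [this]
    have e1 : hm.stieltjesFunction x = m x := congrFun hs1 x
    have e2 : hm2.stieltjesFunction x = (K : ℝ) * x + g x := congrFun hs2 x
    rw [e1, e2]
    simp [hm_def]
    ring
  have hidm : StieltjesFunction.id.measure = (volume : Measure ℝ) := by
    rw [Real.volume_eq_stieltjes_id]
  have hmeas_sum : μ + hm2.stieltjesFunction.measure = (2 * K : NNReal) • (volume : Measure ℝ) := by
    rw [← hidm, ← StieltjesFunction.measure_smul, ← StieltjesFunction.measure_add, hsum]
  have hle : μ ≤ (2 * K : NNReal) • (volume : Measure ℝ) := by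
    rw [← hmeas_sum]; exact Measure.le_add_right le_rfl
  have hac : μ ≪ (volume : Measure ℝ) :=
    (Measure.absolutelyContinuous_of_le hle).trans ((Measure.AbsolutelyContinuous.refl _).smul_left _)
  have hwd : (volume : Measure ℝ).withDensity (μ.rnDeriv volume) = μ :=
    Measure.withDensity_rnDeriv_eq μ volume hac
  -- a.e. bound on the density on (a,b)
  have hbound : ∀ᵐ t ∂(volume : Measure ℝ).restrict (Ioo a b),
      μ.rnDeriv volume t ≤ ENNReal.ofReal (K : ℝ) := by
    have h1 : ∀ᵐ t ∂(volume : Measure ℝ).restrict (Ioo a b),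
        HasDerivAt m ((μ.rnDeriv volume t).toReal) t :=
      ae_restrict_of_ae hm.ae_hasDerivAt
    have h2 : ∀ᵐ t ∂(volume : Measure ℝ).restrict (Ioo a b),
        μ.rnDeriv volume t < ⊤ :=
      ae_restrict_of_ae (Measure.rnDeriv_lt_top μ volume)
    filter_upwards [h1, h2, hae] with t ht1 ht2 ht3
    obtain ⟨c, hc0, hc⟩ := ht3
    have hm' : HasDerivAt m ((K : ℝ) - c) t := by
      simpa [hm_def, Pi.sub_def] using ((hasDerivAt_id t).const_mul (K : ℝ)).sub hc
    have := ht1.unique hm'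
    have h4 : (μ.rnDeriv volume t) = ENNReal.ofReal ((K : ℝ) - c) := by
      rw [← this, ENNReal.ofReal_toReal ht2.ne]
    rw [h4]
    exact ENNReal.ofReal_le_ofReal (by linarith)
  -- conclude
  intro x hx y hy hxy
  rcases eq_or_lt_of_le hxy with rfl | hxy'
  · exact le_refl _
  have hIoosub : Ioo x y ⊆ Ioo a b := Ioo_subset_Ioo hx.1 hy.2
  have hμIoo : μ (Ioo x y) = ENNReal.ofReal (m y - m x) := by
    rw [StieltjesFunction.measure_Ioo]
    congr 1
    have : leftLim (hm.stieltjesFunction : ℝ → ℝ) y = m y := by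
      rw [hs1]
      exact leftLim_eq_of_tendsto
        ((hmc.tendsto y).mono_left nhdsWithin_le_nhds)
    rw [this, congrFun hs1 x]
  have hint : μ (Ioo x y) ≤ ENNReal.ofReal (K : ℝ) * volume (Ioo x y) := by
    rw [← hwd, withDensity_apply _ measurableSet_Ioo]
    calc ∫⁻ t in Ioo x y, μ.rnDeriv volume t ∂volume
        ≤ ∫⁻ _ in Ioo x y, ENNReal.ofReal (K : ℝ) ∂volume := by
          apply lintegral_mono_ae
          exact ae_restrict_of_ae_restrict_of_subset hIoosub hbound
      _ = ENNReal.ofReal (K : ℝ) * volume (Ioo x y) := by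
          rw [setLIntegral_const]
  have hvol : volume (Ioo x y) = ENNReal.ofReal (y - x) := Real.volume_Ioo
  rw [hμIoo, hvol, ← ENNReal.ofReal_mul (K.coe_nonneg)] at hint
  have hKd : (0:ℝ) ≤ (K : ℝ) * (y - x) := mul_nonneg K.coe_nonneg (by linarith)
  have hfin : m y - m x ≤ (K : ℝ) * (y - x) :=
    (ENNReal.ofReal_le_ofReal_iff hKd).mp hint
  have : m x ≤ m y := hm hxy
  simp only [hm_def] at hfin
  linarith

variable {F : Type*} [NormedAddCommGroup F] [InnerProductSpace ℝ F] [CompleteSpace F]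

lemma fderiv_eq_toDual_gradient {g : F → ℝ} {x : F} (h : DifferentiableAt ℝ g x) :
    fderiv ℝ g x = InnerProductSpace.toDual ℝ F (gradient g x) :=
  (hasGradientAt_iff_hasFDerivAt.mp h.hasGradientAt).fderiv

lemma chain_rule_curve (Ffun : ℝ × F → ℝ) {t : ℝ} {φ : ℝ → F} {v : F}
    (hF : DifferentiableAt ℝ Ffun (t, φ t)) (hφ : HasDerivAt φ v t) :
    HasDerivAt (fun s => Ffun (s, φ s))
      (deriv (fun s => Ffun (s, φ t)) t + ⟪gradient (fun y => Ffun (t, y)) (φ t), v⟫_ℝ) t := by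
  set D := fderiv ℝ Ffun (t, φ t) with hD_def
  have hD : HasFDerivAt Ffun D (t, φ t) := hF.hasFDerivAt
  have hΦ : HasDerivAt (fun s => (s, φ s)) ((1 : ℝ), v) t := (hasDerivAt_id t).prodMk hφ
  have hcomp : HasDerivAt (fun s => Ffun (s, φ s)) (D ((1 : ℝ), v)) t := by
    simpa [Function.comp_def] using hD.comp_hasDerivAt t hΦ
  have htime : HasDerivAt (fun s => Ffun (s, φ t)) (D ((1 : ℝ), 0)) t := by
    have := hD.comp_hasDerivAt t ((hasDerivAt_id t).prodMk (hasDerivAt_const t (φ t)))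
    simpa [Function.comp_def] using this
  have hsp : HasFDerivAt (fun y => Ffun (t, y)) (D.comp (ContinuousLinearMap.inr ℝ ℝ F)) (φ t) := by
    have := hD.comp (φ t) (hasFDerivAt_prodMk_right t (φ t))
    simpa [Function.comp_def] using this
  have hgr : HasFDerivAt (fun y => Ffun (t, y))
      (InnerProductSpace.toDual ℝ F (gradient (fun y => Ffun (t, y)) (φ t))) (φ t) :=
    hasGradientAt_iff_hasFDerivAt.mp hsp.differentiableAt.hasGradientAt
  have huniq := hgr.unique hsp
  have hinner : ⟪gradient (fun y => Ffun (t, y)) (φ t), v⟫_ℝ = D ((0 : ℝ), v) := by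
    have := congrFun (congrArg DFunLike.coe huniq) v
    simpa [InnerProductSpace.toDual_apply_apply] using this
  have hderiv : deriv (fun s => Ffun (s, φ t)) t = D ((1 : ℝ), 0) := htime.deriv
  have hsplit : D ((1 : ℝ), v) = D ((1 : ℝ), 0) + D ((0 : ℝ), v) := by
    rw [← map_add]
    norm_num
  rw [hderiv, hinner, ← hsplit]
  exact hcomp

lemma gradient_convex_ineq {H : F → ℝ} (hH : Differentiable ℝ H)
    (hconv : ConvexOn ℝ univ H) (p q : F) :
    ⟪gradient H p, q - p⟫_ℝ ≤ H q - H p := by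
  set ψ : ℝ → ℝ := H ∘ (AffineMap.lineMap p q : ℝ →ᵃ[ℝ] F) with hψ_def
  have hψconv : ConvexOn ℝ univ ψ := by
    simpa using hconv.comp_affineMap (AffineMap.lineMap p q)
  have hline : ∀ s : ℝ, HasDerivAt (fun s : ℝ => (AffineMap.lineMap p q : ℝ →ᵃ[ℝ] F) s) (q - p) s := by
    intro s
    have h1 : HasDerivAt (fun s : ℝ => s • (q - p) + p) ((1 : ℝ) • (q - p)) s :=
      ((hasDerivAt_id s).smul_const (q - p)).add_const p
    simp only [one_smul] at h1
    convert h1 using 2 with s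
    exact AffineMap.lineMap_apply_module' p q s
  have hψ0 : HasDerivAt ψ (fderiv ℝ H p (q - p)) 0 := by
    have h0 : (AffineMap.lineMap p q : ℝ →ᵃ[ℝ] F) (0 : ℝ) = p := AffineMap.lineMap_apply_zero p q
    have := (hH ((AffineMap.lineMap p q : ℝ →ᵃ[ℝ] F) (0 : ℝ))).hasFDerivAt.comp_hasDerivAt 0 (hline 0)
    rw [h0] at this
    exact this
  have hslope := hψconv.deriv_le_slope (mem_univ (0:ℝ)) (mem_univ (1:ℝ)) one_pos hψ0.differentiableAt
  rw [hψ0.deriv] at hslope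
  have h1 : ψ 1 = H q := by simp [hψ_def]
  have h0 : ψ 0 = H p := by simp [hψ_def]
  have hsl : slope ψ 0 1 = H q - H p := by
    rw [slope_def_field, h1, h0]
    simp
  rw [hsl] at hslope
  have := fderiv_eq_toDual_gradient (hH p)
  rw [this] at hslope
  simpa [InnerProductSpace.toDual_apply_apply] using hslope

end AuxLemmas

/-- Let `H` be `C²` convex, `u` a classical solution of
`∂ₜ u = H(∇ₓ u)` on `[0,T] × ℝᵈ` (Lipschitz, everywhere differentiable with Lipschitz
gradient) and `f` a Lipschitz function. Let `φ` be a Lipschitz curve solving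
`φ'(t) = −∇H(∇ₓ u(t,φ(t)))` for all `t`, and suppose that for a.e. `t ∈ (0,T)`, `f` is
differentiable at `(t,φ(t))` with `∂ₜ f(t,φ(t)) − H(∇ₓ f(t,φ(t))) = 0`. Then
`t ↦ f(t,φ(t)) − u(t,φ(t))` is non-decreasing on `[0,T]`. -/
theorem difference_nondecreasing_along_u_characteristics
    (d : ℕ) (hd : 1 ≤ d) (T : ℝ) (hT : 0 < T)
    (H : EuclideanSpace ℝ (Fin d) → ℝ) (hH : ContDiff ℝ 2 H)
    (hHconv : ConvexOn ℝ univ H)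
    (u : ℝ × EuclideanSpace ℝ (Fin d) → ℝ)
    (huLip : ∃ L, LipschitzOnWith L u
        (Icc 0 T ×ˢ (univ : Set (EuclideanSpace ℝ (Fin d)))))
    (huDiff : ∀ p : ℝ × EuclideanSpace ℝ (Fin d), p.1 ∈ Icc 0 T → DifferentiableAt ℝ u p)
    (huGradLip : ∃ L, LipschitzOnWith L (fun p => fderiv ℝ u p)
        (Icc 0 T ×ˢ (univ : Set (EuclideanSpace ℝ (Fin d)))))
    (huEq : ∀ p : ℝ × EuclideanSpace ℝ (Fin d), p.1 ∈ Icc 0 T →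
        deriv (fun s => u (s, p.2)) p.1 = H (gradient (fun y => u (p.1, y)) p.2))
    (f : ℝ × EuclideanSpace ℝ (Fin d) → ℝ)
    (hfLip : ∃ L, LipschitzOnWith L f
        (Icc 0 T ×ˢ (univ : Set (EuclideanSpace ℝ (Fin d)))))
    (φ : ℝ → EuclideanSpace ℝ (Fin d))
    (hφLip : ∃ M, LipschitzOnWith M φ (Icc 0 T))
    (hφode : ∀ t ∈ Icc (0 : ℝ) T,
        HasDerivAt φ (-(gradient H (gradient (fun y => u (t, y)) (φ t)))) t)
    (hfEq : ∀ᵐ t ∂(volume : Measure ℝ).restrict (Ioo 0 T),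
        DifferentiableAt ℝ f (t, φ t) ∧
        deriv (fun s => f (s, φ t)) t = H (gradient (fun y => f (t, y)) (φ t))) :
    MonotoneOn (fun t => f (t, φ t) - u (t, φ t)) (Icc 0 T) := by

  obtain ⟨Lf, hLf⟩ := hfLip
  obtain ⟨Lu, hLu⟩ := huLip
  obtain ⟨M, hM⟩ := hφLip
  have hΦ : LipschitzOnWith (1 ⊔ M) (fun t => (t, φ t)) (Icc 0 T) :=
    (LipschitzWith.id.lipschitzOnWith).prodMk hM
  have hmaps : MapsTo (fun t => (t, φ t)) (Icc 0 T) (Icc 0 T ×ˢ (univ : Set (EuclideanSpace ℝ (Fin d)))) :=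
    fun t ht => ⟨ht, mem_univ _⟩
  set g₀ : ℝ → ℝ := fun t => f (t, φ t) - u (t, φ t) with hg₀_def
  have hg₀lip : LipschitzOnWith (Lf * (1 ⊔ M) + Lu * (1 ⊔ M)) g₀ (Icc 0 T) :=
    (hLf.comp hΦ hmaps).sub (hLu.comp hΦ hmaps)
  obtain ⟨g, hgLip, hEqOn⟩ := hg₀lip.extend_real
  have hae : ∀ᵐ t ∂(volume : Measure ℝ).restrict (Ioo 0 T), ∃ c, 0 ≤ c ∧ HasDerivAt g c t := by
    filter_upwards [hfEq, ae_restrict_mem measurableSet_Ioo] with t ht htm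
    obtain ⟨hfdiff, hfpde⟩ := ht
    have htIcc : t ∈ Icc 0 T := mem_Icc_of_Ioo htm
    set p := gradient (fun y => u (t, y)) (φ t) with hp_def
    set q := gradient (fun y => f (t, y)) (φ t) with hq_def
    have hφ' : HasDerivAt φ (-(gradient H p)) t := hφode t htIcc
    have hu : DifferentiableAt ℝ u (t, φ t) := huDiff (t, φ t) htIcc
    have hw : HasDerivAt (fun s => f (s, φ s))
        (deriv (fun s => f (s, φ t)) t + ⟪q, -(gradient H p)⟫_ℝ) t :=
      chain_rule_curve f hfdiff hφ'
    have hv : HasDerivAt (fun s => u (s, φ s))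
        (deriv (fun s => u (s, φ t)) t + ⟪p, -(gradient H p)⟫_ℝ) t :=
      chain_rule_curve u hu hφ'
    have hupde : deriv (fun s => u (s, φ t)) t = H p := huEq (t, φ t) htIcc
    rw [hfpde] at hw
    rw [hupde] at hv
    have hg₀d : HasDerivAt g₀
        ((H q + ⟪q, -(gradient H p)⟫_ℝ) - (H p + ⟪p, -(gradient H p)⟫_ℝ)) t := hw.sub hv
    have hc : (H q + ⟪q, -(gradient H p)⟫_ℝ) - (H p + ⟪p, -(gradient H p)⟫_ℝ)
        = H q - H p - ⟪gradient H p, q - p⟫_ℝ := by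
      have hcomm : ⟪gradient H p, q - p⟫_ℝ = ⟪q, gradient H p⟫_ℝ - ⟪p, gradient H p⟫_ℝ := by
        rw [real_inner_comm, inner_sub_left]
      rw [inner_neg_right, inner_neg_right, hcomm]
      ring
    have hnonneg : 0 ≤ (H q + ⟪q, -(gradient H p)⟫_ℝ) - (H p + ⟪p, -(gradient H p)⟫_ℝ) := by
      rw [hc]
      have := gradient_convex_ineq (hH.differentiable (by norm_num)) hHconv p q
      linarith
    refine ⟨_, hnonneg, ?_⟩
    refine hg₀d.congr_of_eventuallyEq ?_
    exact Filter.eventuallyEq_of_mem (isOpen_Ioo.mem_nhds htm)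
      (fun x hx => (hEqOn (mem_Icc_of_Ioo hx)).symm)
  have hmono : MonotoneOn g (Icc 0 T) := lipschitz_mono_of_ae_deriv_nonneg' hgLip hae
  intro x hx y hy hxy
  show g₀ x ≤ g₀ y
  rw [hEqOn hx, hEqOn hy]
  exact hmono hx hy hxy
end
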